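/- arXiv:1312.4020 — 6 statements merged into one kernel-verified Lean document; each statement's English description precedes it below -/
import Mathlib

section
/- Let ν ∈ ℝ, ν ≠ 0, and let F : ℝ³ → ℝ³ be a Schwartz vector field satisfying curl F = ν F (a Trkalian field). Then for every unit vector κ ∈ ℝ³ and every p ∈ ℝ, the Radon transform F^R satisfies the eigenvalue equation ∂F^R/∂p (p, κ) + ν (κ × F^R(p, κ)) = 0, and moreover κ · F^R(p, κ) = 0. -/
open MeasureTheory

noncomputable section

/-- Physical space `ℝ³` with the Euclidean structure. -/
abbrev E3 : Type := EuclideanSpace ℝ (Fin 3)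

/-- Partial derivative in the `j`-th coordinate direction. -/
def pd (j : Fin 3) (f : E3 → ℝ) (x : E3) : ℝ :=
  fderiv ℝ f x (EuclideanSpace.single j 1)

/-- The curl of a vector field on `ℝ³`. -/
def curl3 (G : E3 → E3) (x : E3) : E3 :=
  (EuclideanSpace.equiv (Fin 3) ℝ).symm
    ![pd 1 (fun y => G y 2) x - pd 2 (fun y => G y 1) x,
      pd 2 (fun y => G y 0) x - pd 0 (fun y => G y 2) x,
      pd 0 (fun y => G y 1) x - pd 1 (fun y => G y 0) x]

/-- The divergence of a vector field on `ℝ³`. -/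
def div3 (G : E3 → E3) (x : E3) : ℝ := ∑ i, pd i (fun y => G y i) x

/-- The gradient of a scalar field on `ℝ³`. -/
def grad3 (f : E3 → ℝ) (x : E3) : E3 :=
  (EuclideanSpace.equiv (Fin 3) ℝ).symm ![pd 0 f x, pd 1 f x, pd 2 f x]

/-- The Laplacian of a scalar field on `ℝ³`. -/
def lap3 (f : E3 → ℝ) (x : E3) : ℝ := ∑ i, pd i (pd i f) x

/-- The cross product on `ℝ³`. -/
def cross3 (a b : E3) : E3 :=
  (EuclideanSpace.equiv (Fin 3) ℝ).symm
    ![a 1 * b 2 - a 2 * b 1, a 2 * b 0 - a 0 * b 2, a 0 * b 1 - a 1 * b 0]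

/-- A Schwartz vector field: all components are Schwartz functions. -/
def IsSchwartzField (F : E3 → E3) : Prop :=
  ∀ i : Fin 3, ∃ g : SchwartzMap E3 ℝ, ∀ x, F x i = g x

/-- A Schwartz scalar function. -/
def IsSchwartzFn (f : E3 → ℝ) : Prop :=
  ∃ g : SchwartzMap E3 ℝ, ∀ x, f x = g x

/-- The Radon transform: integral of `F` over the plane `{z : κ·z = p}`,
with respect to the 2-dimensional Lebesgue measure on `κ⊥`. -/
def radon (F : E3 → E3) (p : ℝ) (κ : E3) : E3 :=
  ∫ y : (Submodule.span ℝ {κ})ᗮ, F (p • κ + (y : E3))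

/-- The X-ray transform of a vector field. -/
def xray (F : E3 → E3) (θ x : E3) : E3 := ∫ s : ℝ, F (x + s • θ)

/-- The X-ray transform of a scalar field. -/
def xrayS (f : E3 → ℝ) (θ x : E3) : ℝ := ∫ s : ℝ, f (x + s • θ)

/-- The Divergent beam (cone beam) transform of a vector field. -/
def dbeam (F : E3 → E3) (θ x : E3) : E3 := ∫ s in Set.Ioi (0 : ℝ), F (x + s • θ)

/-- The surface measure on the unit sphere `S² ⊂ ℝ³` (total mass `4π`). -/
def sphMeasure : Measure (Metric.sphere (0 : E3) 1) := (volume : Measure E3).toSphere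



lemma schwartz_decay4 {F : Type*} [NormedAddCommGroup F] [NormedSpace ℝ F]
    (g : SchwartzMap E3 F) : ∃ C : ℝ, ∀ x, ‖g x‖ ≤ C * ((1 + ‖x‖) ^ 4)⁻¹ := by
  refine ⟨2 ^ 4 * (Finset.Iic ((4:ℕ),(0:ℕ))).sup
    (fun m => SchwartzMap.seminorm ℝ m.1 m.2) g, fun x => ?_⟩
  have h := SchwartzMap.one_add_le_sup_seminorm_apply (𝕜 := ℝ) (m := ((4:ℕ),(0:ℕ)))
    (k := 4) (n := 0) le_rfl le_rfl g x
  rw [norm_iteratedFDeriv_zero] at h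
  have hx : (0:ℝ) < (1 + ‖x‖) ^ 4 := by positivity
  rw [le_mul_inv_iff₀ hx]
  calc ‖g x‖ * (1 + ‖x‖) ^ 4 = (1 + ‖x‖) ^ 4 * ‖g x‖ := by ring
    _ ≤ _ := h

lemma one_add_inv_le (c y : E3) :
    ((1 + ‖c + y‖) ^ 4)⁻¹ ≤ (1 + ‖c‖) ^ 4 * ((1 + ‖y‖) ^ 4)⁻¹ := by
  have h0 : ‖y‖ ≤ ‖c‖ + ‖c + y‖ := by
    have := norm_sub_le (c + y) c
    simp only [add_sub_cancel_left] at this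
    linarith
  have h1 : 1 + ‖y‖ ≤ (1 + ‖c‖) * (1 + ‖c + y‖) := by nlinarith [norm_nonneg c, norm_nonneg (c+y)]
  have h2 : (1 + ‖y‖) ^ 4 ≤ (1 + ‖c‖) ^ 4 * (1 + ‖c + y‖) ^ 4 := by
    have := pow_le_pow_left₀ (by positivity) h1 4
    rwa [mul_pow] at this
  have hy : (0:ℝ) < (1 + ‖y‖) ^ 4 := by positivity
  have ha : (0:ℝ) < (1 + ‖c + y‖) ^ 4 := by positivity
  rw [inv_le_iff_one_le_mul₀' ha]
  calc (1:ℝ) = (1 + ‖y‖) ^ 4 * ((1 + ‖y‖) ^ 4)⁻¹ := (mul_inv_cancel₀ hy.ne').symm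
    _ ≤ ((1 + ‖c‖) ^ 4 * (1 + ‖c + y‖) ^ 4) * ((1 + ‖y‖) ^ 4)⁻¹ := by gcongr
    _ = _ := by ring

lemma integrable_majorant (κ : E3) (K : ℝ) :
    Integrable (fun y : (Submodule.span ℝ {κ})ᗮ => K * ((1 + ‖y‖) ^ 4)⁻¹) := by
  have hr : (Module.finrank ℝ (Submodule.span ℝ {κ})ᗮ : ℝ) < 4 := by
    have h1 : Module.finrank ℝ (Submodule.span ℝ {κ})ᗮ ≤ Module.finrank ℝ E3 :=
      Submodule.finrank_le _
    have h2 : Module.finrank ℝ E3 = 3 := finrank_euclideanSpace_fin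
    have h3 : Module.finrank ℝ (Submodule.span ℝ {κ})ᗮ ≤ 3 := le_trans h1 (le_of_eq h2)
    exact_mod_cast lt_of_le_of_lt (Nat.cast_le.mpr h3) (by norm_num)
  have h := (integrable_one_add_norm (E := (Submodule.span ℝ {κ})ᗮ) (r := 4)
    (μ := volume) hr).const_mul K
  refine h.congr (Filter.Eventually.of_forall fun y => ?_)
  have hpos : (0:ℝ) < 1 + ‖y‖ := by positivity
  show K * (1 + ‖y‖) ^ (-4:ℝ) = _
  rw [Real.rpow_neg hpos.le, show ((4:ℝ)) = ((4:ℕ):ℝ) by norm_num, Real.rpow_natCast]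

lemma integrable_comp_plane {F : Type*} [NormedAddCommGroup F] [NormedSpace ℝ F]
    (κ : E3) (g : SchwartzMap E3 F) (c : E3) :
    Integrable (fun y : (Submodule.span ℝ {κ})ᗮ => g (c + (y:E3))) := by
  obtain ⟨C, hC⟩ := schwartz_decay4 g
  have hC0 : 0 ≤ C := by
    have h := hC 0
    have h2 : (0:ℝ) ≤ C * ((1 + ‖(0:E3)‖) ^ 4)⁻¹ := le_trans (norm_nonneg _) h
    simpa using h2
  refine (integrable_majorant κ (C * (1 + ‖c‖)^4)).mono'
    ((g.continuous.comp (continuous_const.add continuous_subtype_val)).aestronglyMeasurable)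
    (Filter.Eventually.of_forall fun y => ?_)
  calc ‖g (c + (y:E3))‖ ≤ C * ((1 + ‖c + (y:E3)‖) ^ 4)⁻¹ := hC _
    _ ≤ C * ((1 + ‖c‖) ^ 4 * ((1 + ‖(y:E3)‖) ^ 4)⁻¹) := by
        exact mul_le_mul_of_nonneg_left (one_add_inv_le c y) hC0
    _ = C * (1 + ‖c‖)^4 * ((1 + ‖y‖) ^ 4)⁻¹ := by rw [Submodule.coe_norm]; ring

lemma integrable_fderiv_apply (κ : E3) (g : SchwartzMap E3 ℝ) (c w : E3) :
    Integrable (fun y : (Submodule.span ℝ {κ})ᗮ => fderiv ℝ g (c + (y:E3)) w) := by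
  have h := integrable_comp_plane κ (SchwartzMap.fderivCLM ℝ E3 ℝ g) c
  have h2 := (ContinuousLinearMap.apply ℝ ℝ w).integrable_comp h
  refine h2.congr (Filter.Eventually.of_forall fun y => ?_)
  simp [SchwartzMap.fderivCLM_apply]

lemma schwartz_fderiv_decay4 (g : SchwartzMap E3 ℝ) :
    ∃ C : ℝ, 0 ≤ C ∧ ∀ x, ‖fderiv ℝ g x‖ ≤ C * ((1 + ‖x‖) ^ 4)⁻¹ := by
  obtain ⟨C, hC⟩ := schwartz_decay4 (SchwartzMap.fderivCLM ℝ E3 ℝ g)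
  refine ⟨C, ?_, fun x => ?_⟩
  · have h := hC 0
    have h2 : (0:ℝ) ≤ C * ((1 + ‖(0:E3)‖) ^ 4)⁻¹ := le_trans (norm_nonneg _) h
    simpa using h2
  · have := hC x
    rwa [SchwartzMap.fderivCLM_apply] at this

lemma hasDerivAt_line (g : SchwartzMap E3 ℝ) (κ c : E3) (q : ℝ) :
    HasDerivAt (fun t : ℝ => g (t • κ + c)) (fderiv ℝ g (q • κ + c) κ) q := by
  have hline : HasDerivAt (fun t : ℝ => t • κ + c) κ q := by
    have h1 : HasDerivAt (fun t : ℝ => t • κ) ((1:ℝ) • κ) q := (hasDerivAt_id q).smul_const κ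
    simpa using h1.add_const c
  exact (g.differentiable.differentiableAt.hasFDerivAt).comp_hasDerivAt q hline

lemma hasDerivAt_plane_integral (κ : E3) (g : SchwartzMap E3 ℝ) (p : ℝ) :
    HasDerivAt (fun q : ℝ => ∫ y : (Submodule.span ℝ {κ})ᗮ, g (q • κ + (y:E3)))
      (∫ y : (Submodule.span ℝ {κ})ᗮ, fderiv ℝ g (p • κ + (y:E3)) κ) p := by
  obtain ⟨C, hC0, hC⟩ := schwartz_fderiv_decay4 g
  have key := hasDerivAt_integral_of_dominated_loc_of_deriv_le
    (F := fun q (y : (Submodule.span ℝ {κ})ᗮ) => g (q • κ + (y:E3)))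
    (F' := fun q (y : (Submodule.span ℝ {κ})ᗮ) => fderiv ℝ g (q • κ + (y:E3)) κ)
    (bound := fun y : (Submodule.span ℝ {κ})ᗮ =>
      C * ‖κ‖ * (1 + (|p|+1) * ‖κ‖)^4 * ((1 + ‖y‖)^4)⁻¹)
    (x₀ := p) (s := Metric.ball p 1) (Metric.ball_mem_nhds p one_pos)
    (Filter.Eventually.of_forall fun q =>
      ((g.continuous.comp (by continuity)).aestronglyMeasurable))
    (by simpa using integrable_comp_plane κ g (p • κ))
    (by
      have hcont : Continuous fun y : (Submodule.span ℝ {κ})ᗮ =>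
          fderiv ℝ g (p • κ + (y:E3)) κ := by
        have h1 : Continuous fun y : (Submodule.span ℝ {κ})ᗮ =>
            (SchwartzMap.fderivCLM ℝ E3 ℝ g) (p • κ + (y:E3)) :=
          (SchwartzMap.fderivCLM ℝ E3 ℝ g).continuous.comp (by continuity)
        have h2 := ((ContinuousLinearMap.apply ℝ ℝ κ).continuous).comp h1
        simpa [SchwartzMap.fderivCLM_apply, Function.comp_def] using h2
      exact hcont.aestronglyMeasurable)
    (Filter.Eventually.of_forall fun y => fun q hq => by
      have hb1 : ‖fderiv ℝ g (q • κ + (y:E3)) κ‖ ≤ ‖fderiv ℝ g (q • κ + (y:E3))‖ * ‖κ‖ :=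
        ContinuousLinearMap.le_opNorm _ κ
      have hb2 : ‖fderiv ℝ g (q • κ + (y:E3))‖ ≤ C * ((1 + ‖q • κ + (y:E3)‖)^4)⁻¹ := hC _
      have hb3 : ((1 + ‖q • κ + (y:E3)‖)^4)⁻¹ ≤ (1 + ‖q • κ‖)^4 * ((1 + ‖(y:E3)‖)^4)⁻¹ :=
        one_add_inv_le (q • κ) y
      have hq1 : |q| ≤ |p| + 1 := by
        have := abs_sub_abs_le_abs_sub q p
        have h2 : |q - p| < 1 := by simpa [Real.dist_eq] using hq
        linarith
      have hb4 : (1 + ‖q • κ‖)^4 ≤ (1 + (|p|+1) * ‖κ‖)^4 := by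
        apply pow_le_pow_left₀ (by positivity)
        rw [norm_smul]
        have : ‖q‖ * ‖κ‖ ≤ (|p|+1) * ‖κ‖ :=
          mul_le_mul_of_nonneg_right (by simpa [Real.norm_eq_abs] using hq1) (norm_nonneg κ)
        linarith
      have hyn : ‖(y:E3)‖ = ‖y‖ := rfl
      have hinv : (0:ℝ) ≤ ((1 + ‖(y:E3)‖)^4)⁻¹ := by positivity
      calc ‖fderiv ℝ g (q • κ + (y:E3)) κ‖
          ≤ ‖fderiv ℝ g (q • κ + (y:E3))‖ * ‖κ‖ := hb1
        _ ≤ (C * ((1 + ‖q • κ + (y:E3)‖)^4)⁻¹) * ‖κ‖ :=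
            mul_le_mul_of_nonneg_right hb2 (norm_nonneg κ)
        _ ≤ (C * ((1 + ‖q • κ‖)^4 * ((1 + ‖(y:E3)‖)^4)⁻¹)) * ‖κ‖ :=
            mul_le_mul_of_nonneg_right
              (mul_le_mul_of_nonneg_left hb3 hC0) (norm_nonneg κ)
        _ ≤ (C * ((1 + (|p|+1) * ‖κ‖)^4 * ((1 + ‖(y:E3)‖)^4)⁻¹)) * ‖κ‖ := by
            have := mul_le_mul_of_nonneg_right hb4 hinv
            exact mul_le_mul_of_nonneg_right (mul_le_mul_of_nonneg_left this hC0) (norm_nonneg κ)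
        _ = C * ‖κ‖ * (1 + (|p|+1) * ‖κ‖)^4 * ((1 + ‖y‖)^4)⁻¹ := by rw [hyn]; ring)
    (integrable_majorant κ _)
    (Filter.Eventually.of_forall fun y => fun q _ => by
      simpa [add_comm] using hasDerivAt_line g κ (y:E3) q)
  exact key.2

set_option maxHeartbeats 1000000 in
open FourierTransform in
lemma integral_fderiv_tangent (κ : E3) (g : SchwartzMap E3 ℝ) (c : E3)
    (v : (Submodule.span ℝ {κ})ᗮ) :
    ∫ y : (Submodule.span ℝ {κ})ᗮ, fderiv ℝ g (c + (y:E3)) ((v:E3)) = 0 := by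
  let ι : (Submodule.span ℝ {κ})ᗮ →L[ℝ] E3 := (Submodule.span ℝ {κ})ᗮ.subtypeL
  let h : (Submodule.span ℝ {κ})ᗮ → ℂ := fun y => (g (c + (y:E3)) : ℂ)
  letI : NormedAddCommGroup ((Submodule.span ℝ {κ})ᗮ →L[ℝ] ℂ) :=
    ContinuousLinearMap.toNormedAddCommGroup
  have hfd : ∀ y : (Submodule.span ℝ {κ})ᗮ, HasFDerivAt h
      (Complex.ofRealCLM.comp ((fderiv ℝ g (c + (y:E3))).comp ι)) y := by
    intro y
    have hA : HasFDerivAt (fun y : (Submodule.span ℝ {κ})ᗮ => c + (y:E3)) ι y :=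
      (ι.hasFDerivAt).const_add c
    exact (Complex.ofRealCLM.hasFDerivAt).comp y
      ((g.differentiable.differentiableAt.hasFDerivAt).comp y hA)
  have hdiff : Differentiable ℝ h := fun y => (hfd y).differentiableAt
  have hfd' : ∀ y : (Submodule.span ℝ {κ})ᗮ, fderiv ℝ h y =
      Complex.ofRealCLM.comp ((fderiv ℝ g (c + (y:E3))).comp ι) :=
    fun y => (hfd y).fderiv
  have hint : Integrable h :=
    Complex.ofRealCLM.integrable_comp (integrable_comp_plane κ g c)
  let L : (E3 →L[ℝ] ℝ) →L[ℝ] ((Submodule.span ℝ {κ})ᗮ →L[ℝ] ℂ) :=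
    (ContinuousLinearMap.compL ℝ (Submodule.span ℝ {κ})ᗮ ℝ ℂ Complex.ofRealCLM).comp
      ((ContinuousLinearMap.compL ℝ (Submodule.span ℝ {κ})ᗮ E3 ℝ).flip ι)
  have hint' : Integrable (fderiv ℝ h) := by
    have hPhi : Integrable (fun y : (Submodule.span ℝ {κ})ᗮ =>
        (SchwartzMap.fderivCLM ℝ E3 ℝ g) (c + (y:E3))) :=
      integrable_comp_plane κ (SchwartzMap.fderivCLM ℝ E3 ℝ g) c
    have h1 := ContinuousLinearMap.integrable_comp (𝕜 := ℝ) (H := E3 →L[ℝ] ℝ)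
      (E := (Submodule.span ℝ {κ})ᗮ →L[ℝ] ℂ) (𝕜' := ℝ) (σ := RingHom.id ℝ) L hPhi
    refine h1.congr (Filter.Eventually.of_forall fun y => ?_)
    simp only [hfd' y, L, ContinuousLinearMap.comp_apply, ContinuousLinearMap.flip_apply,
      ContinuousLinearMap.compL_apply, SchwartzMap.fderivCLM_apply]
  have key := Real.fourier_fderiv hint hdiff hint'
  have h0 : 𝓕 (fderiv ℝ h) 0 = ∫ y : (Submodule.span ℝ {κ})ᗮ, fderiv ℝ h y := by
    rw [Real.fourier_eq]
    simp
  have hR : VectorFourier.fourierSMulRight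
      (-(innerSL ℝ (E := (Submodule.span ℝ {κ})ᗮ))) (𝓕 h) 0 = 0 := by
    ext w
    simp [VectorFourier.fourierSMulRight_apply]
  have hzero : (∫ y : (Submodule.span ℝ {κ})ᗮ, fderiv ℝ h y) = 0 := by
    rw [← h0, key, hR]
  have happ := ContinuousLinearMap.integral_apply hint' v
  rw [hzero] at happ
  have happ2 : ∫ y : (Submodule.span ℝ {κ})ᗮ,
      ((fderiv ℝ g (c + (y:E3)) ((v:E3)) : ℝ) : ℂ) = 0 := by
    rw [show (∫ y : (Submodule.span ℝ {κ})ᗮ, ((fderiv ℝ g (c + (y:E3)) ((v:E3)) : ℝ) : ℂ))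
        = ∫ y : (Submodule.span ℝ {κ})ᗮ, (fderiv ℝ h y) v from
      integral_congr_ae (Filter.Eventually.of_forall fun y => by
        simp only [hfd' y]; rfl)]
    rw [← happ]
    simp
  have hcomm := ContinuousLinearMap.integral_comp_comm Complex.ofRealCLM
    (integrable_fderiv_apply κ g c ((v:E3)))
  simp only [Complex.ofRealCLM_apply] at hcomm
  rw [happ2] at hcomm
  exact_mod_cast hcomm.symm

lemma integral_pd_eq (κ : E3) (hκ1 : (inner ℝ κ κ : ℝ) = 1) (g : SchwartzMap E3 ℝ) (p : ℝ)
    (j : Fin 3) :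
    (∫ y : (Submodule.span ℝ {κ})ᗮ, fderiv ℝ g (p • κ + (y:E3)) (EuclideanSpace.single j 1))
      = κ j * ∫ y : (Submodule.span ℝ {κ})ᗮ, fderiv ℝ g (p • κ + (y:E3)) κ := by
  have hmem : EuclideanSpace.single j (1:ℝ) - κ j • κ ∈ (Submodule.span ℝ {κ})ᗮ := by
    rw [Submodule.mem_orthogonal_singleton_iff_inner_right]
    rw [inner_sub_right, real_inner_smul_right, EuclideanSpace.inner_single_right, hκ1]
    simp
  set v : (Submodule.span ℝ {κ})ᗮ := ⟨EuclideanSpace.single j (1:ℝ) - κ j • κ, hmem⟩ with hv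
  have hsplit : ∀ x : E3, fderiv ℝ g x (EuclideanSpace.single j 1)
      = κ j * fderiv ℝ g x κ + fderiv ℝ g x ((v:E3)) := by
    intro x
    have hdec : (EuclideanSpace.single j (1:ℝ)) = κ j • κ + ((v:E3)) := by
      rw [hv]
      simp
    rw [hdec, map_add, ContinuousLinearMap.map_smul, smul_eq_mul]
  calc (∫ y : (Submodule.span ℝ {κ})ᗮ, fderiv ℝ g (p • κ + (y:E3)) (EuclideanSpace.single j 1))
      = ∫ y : (Submodule.span ℝ {κ})ᗮ,
          (κ j * fderiv ℝ g (p • κ + (y:E3)) κ + fderiv ℝ g (p • κ + (y:E3)) ((v:E3))) :=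
        integral_congr_ae (Filter.Eventually.of_forall fun y => hsplit _)
    _ = (∫ y : (Submodule.span ℝ {κ})ᗮ, κ j * fderiv ℝ g (p • κ + (y:E3)) κ)
          + ∫ y : (Submodule.span ℝ {κ})ᗮ, fderiv ℝ g (p • κ + (y:E3)) ((v:E3)) :=
        integral_add ((integrable_fderiv_apply κ g (p • κ) κ).const_mul _)
          (integrable_fderiv_apply κ g (p • κ) ((v:E3)))
    _ = κ j * ∫ y : (Submodule.span ℝ {κ})ᗮ, fderiv ℝ g (p • κ + (y:E3)) κ := by
        rw [MeasureTheory.integral_const_mul, integral_fderiv_tangent κ g (p • κ) v, add_zero]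


lemma cross3_apply0 (a b : E3) : cross3 a b 0 = a 1 * b 2 - a 2 * b 1 := rfl
lemma cross3_apply1 (a b : E3) : cross3 a b 1 = a 2 * b 0 - a 0 * b 2 := rfl
lemma cross3_apply2 (a b : E3) : cross3 a b 2 = a 0 * b 1 - a 1 * b 0 := rfl

lemma vec_eq_zero (u : E3) (h0 : u 0 = 0) (h1 : u 1 = 0) (h2 : u 2 = 0) : u = 0 := by
  ext j
  fin_cases j
  · exact h0
  · exact h1
  · exact h2

lemma sum_single_apply (a : Fin 3 → ℝ) (j : Fin 3) :
    (∑ i, (a i) • EuclideanSpace.single i (1:ℝ)) j = a j := by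
  rw [Fin.sum_univ_three]
  simp [EuclideanSpace.single_apply]
  fin_cases j <;> simp

/-- the Radon transform of a Trkalian field satisfies
`∂F^R/∂p (p, κ) + ν (κ × F^R(p, κ)) = 0` and `κ · F^R(p, κ) = 0`. -/
theorem radon_of_trkalian (ν : ℝ) (hν : ν ≠ 0) (F : E3 → E3)
    (hF : IsSchwartzField F) (hT : ∀ x, curl3 F x = ν • F x)
    (κ : E3) (hκ : ‖κ‖ = 1) (p : ℝ) :
    deriv (fun q : ℝ => radon F q κ) p + ν • cross3 κ (radon F p κ) = 0 ∧
      (inner ℝ κ (radon F p κ) : ℝ) = 0 := by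
  classical
  choose g hg using hF
  have hκ1 : (inner ℝ κ κ : ℝ) = 1 := by
    rw [real_inner_self_eq_norm_mul_norm, hκ]; norm_num
  have hsum : κ 0 * κ 0 + κ 1 * κ 1 + κ 2 * κ 2 = 1 := by
    have h := hκ1
    simp only [PiLp.inner_apply, RCLike.inner_apply, conj_trivial, Fin.sum_univ_three] at h
    linear_combination h
  set R : Fin 3 → ℝ → ℝ :=
    fun i q => ∫ y : (Submodule.span ℝ {κ})ᗮ, g i (q • κ + (y:E3)) with hRdef
  set D : Fin 3 → ℝ → ℝ :=
    fun i q => ∫ y : (Submodule.span ℝ {κ})ᗮ, fderiv ℝ (g i) (q • κ + (y:E3)) κ with hDdef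
  have hD : ∀ (i : Fin 3) (q : ℝ), HasDerivAt (R i) (D i q) q :=
    fun i q => hasDerivAt_plane_integral κ (g i) q
  have hFx : ∀ x : E3, F x = ∑ i, (g i x) • EuclideanSpace.single i (1:ℝ) := by
    intro x
    ext j
    rw [sum_single_apply (fun i => g i x) j]
    exact hg j x
  have hradon : ∀ q, radon F q κ = ∑ i, (R i q) • EuclideanSpace.single i (1:ℝ) := by
    intro q
    rw [hRdef]
    calc radon F q κ
        = ∫ y : (Submodule.span ℝ {κ})ᗮ,
            ∑ i, (g i (q • κ + (y:E3))) • EuclideanSpace.single i (1:ℝ) :=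
          integral_congr_ae (Filter.Eventually.of_forall fun y => hFx _)
      _ = ∑ i, ∫ y : (Submodule.span ℝ {κ})ᗮ,
            (g i (q • κ + (y:E3))) • EuclideanSpace.single i (1:ℝ) :=
          integral_finset_sum _ (fun i _ => (integrable_comp_plane κ (g i) (q • κ)).smul_const _)
      _ = ∑ i, (∫ y : (Submodule.span ℝ {κ})ᗮ, g i (q • κ + (y:E3)))
            • EuclideanSpace.single i (1:ℝ) :=
          Finset.sum_congr rfl fun i _ => integral_smul_const _ _
  have hpdF : ∀ (i j : Fin 3) (x : E3),
      pd j (fun y => F y i) x = fderiv ℝ (g i) x (EuclideanSpace.single j 1) := by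
    intro i j x
    have hfun : (fun y => F y i) = ⇑(g i) := funext fun y => hg i y
    simp only [pd, hfun]
  have hcurl0 : ∀ x : E3, fderiv ℝ (g 2) x (EuclideanSpace.single 1 1)
      - fderiv ℝ (g 1) x (EuclideanSpace.single 2 1) = ν * g 0 x := by
    intro x
    have h0 := congrArg (fun v : E3 => v 0) (hT x)
    simpa [curl3, pd, hg] using h0
  have hcurl1 : ∀ x : E3, fderiv ℝ (g 0) x (EuclideanSpace.single 2 1)
      - fderiv ℝ (g 2) x (EuclideanSpace.single 0 1) = ν * g 1 x := by
    intro x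
    have h0 := congrArg (fun v : E3 => v 1) (hT x)
    simpa [curl3, pd, hg] using h0
  have hcurl2 : ∀ x : E3, fderiv ℝ (g 1) x (EuclideanSpace.single 0 1)
      - fderiv ℝ (g 0) x (EuclideanSpace.single 1 1) = ν * g 2 x := by
    intro x
    have h0 := congrArg (fun v : E3 => v 2) (hT x)
    simpa [curl3, pd, hg] using h0
  have hE0 : ∀ q : ℝ, κ 1 * D 2 q - κ 2 * D 1 q = ν * R 0 q := by
    intro q
    have hcong : (∫ y : (Submodule.span ℝ {κ})ᗮ,
        (fderiv ℝ (g 2) (q • κ + (y:E3)) (EuclideanSpace.single 1 1)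
          - fderiv ℝ (g 1) (q • κ + (y:E3)) (EuclideanSpace.single 2 1)))
        = ∫ y : (Submodule.span ℝ {κ})ᗮ, ν * g 0 (q • κ + (y:E3)) :=
      integral_congr_ae (Filter.Eventually.of_forall fun y => hcurl0 _)
    rw [integral_sub (integrable_fderiv_apply κ (g 2) (q • κ) _)
        (integrable_fderiv_apply κ (g 1) (q • κ) _),
      MeasureTheory.integral_const_mul,
      integral_pd_eq κ hκ1 (g 2) q 1, integral_pd_eq κ hκ1 (g 1) q 2] at hcong
    simpa [hRdef, hDdef] using hcong
  have hE1 : ∀ q : ℝ, κ 2 * D 0 q - κ 0 * D 2 q = ν * R 1 q := by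
    intro q
    have hcong : (∫ y : (Submodule.span ℝ {κ})ᗮ,
        (fderiv ℝ (g 0) (q • κ + (y:E3)) (EuclideanSpace.single 2 1)
          - fderiv ℝ (g 2) (q • κ + (y:E3)) (EuclideanSpace.single 0 1)))
        = ∫ y : (Submodule.span ℝ {κ})ᗮ, ν * g 1 (q • κ + (y:E3)) :=
      integral_congr_ae (Filter.Eventually.of_forall fun y => hcurl1 _)
    rw [integral_sub (integrable_fderiv_apply κ (g 0) (q • κ) _)
        (integrable_fderiv_apply κ (g 2) (q • κ) _),
      MeasureTheory.integral_const_mul,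
      integral_pd_eq κ hκ1 (g 0) q 2, integral_pd_eq κ hκ1 (g 2) q 0] at hcong
    simpa [hRdef, hDdef] using hcong
  have hE2 : ∀ q : ℝ, κ 0 * D 1 q - κ 1 * D 0 q = ν * R 2 q := by
    intro q
    have hcong : (∫ y : (Submodule.span ℝ {κ})ᗮ,
        (fderiv ℝ (g 1) (q • κ + (y:E3)) (EuclideanSpace.single 0 1)
          - fderiv ℝ (g 0) (q • κ + (y:E3)) (EuclideanSpace.single 1 1)))
        = ∫ y : (Submodule.span ℝ {κ})ᗮ, ν * g 2 (q • κ + (y:E3)) :=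
      integral_congr_ae (Filter.Eventually.of_forall fun y => hcurl2 _)
    rw [integral_sub (integrable_fderiv_apply κ (g 1) (q • κ) _)
        (integrable_fderiv_apply κ (g 0) (q • κ) _),
      MeasureTheory.integral_const_mul,
      integral_pd_eq κ hκ1 (g 1) q 0, integral_pd_eq κ hκ1 (g 0) q 1] at hcong
    simpa [hRdef, hDdef] using hcong
  have hS : ∀ q, κ 0 * R 0 q + κ 1 * R 1 q + κ 2 * R 2 q = 0 := by
    intro q
    have hν' : ν * (κ 0 * R 0 q + κ 1 * R 1 q + κ 2 * R 2 q) = 0 := by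
      linear_combination -(κ 0 * (hE0 q) + κ 1 * (hE1 q) + κ 2 * (hE2 q))
    rcases mul_eq_zero.mp hν' with h | h
    · exact absurd h hν
    · exact h
  have hSD : κ 0 * D 0 p + κ 1 * D 1 p + κ 2 * D 2 p = 0 := by
    have h1 : HasDerivAt (fun q => κ 0 * R 0 q + κ 1 * R 1 q + κ 2 * R 2 q)
        (κ 0 * D 0 p + κ 1 * D 1 p + κ 2 * D 2 p) p :=
      (((hD 0 p).const_mul (κ 0)).add ((hD 1 p).const_mul (κ 1))).add ((hD 2 p).const_mul (κ 2))
    have h2 : (fun q => κ 0 * R 0 q + κ 1 * R 1 q + κ 2 * R 2 q) = fun _ => (0:ℝ) := funext hS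
    rw [h2] at h1
    exact h1.unique (hasDerivAt_const p 0)
  have hRd : HasDerivAt (fun q => radon F q κ)
      (∑ i, (D i p) • EuclideanSpace.single i (1:ℝ)) p := by
    have h1 : HasDerivAt (fun q => ∑ i, (R i q) • EuclideanSpace.single i (1:ℝ))
        (∑ i, (D i p) • EuclideanSpace.single i (1:ℝ)) p :=
      HasDerivAt.fun_sum fun i _ => (hD i p).smul_const _
    exact h1.congr_of_eventuallyEq (Filter.Eventually.of_forall fun q => hradon q)
  have hderiv : deriv (fun q => radon F q κ)
      p = ∑ i, (D i p) • EuclideanSpace.single i (1:ℝ) := hRd.deriv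
  have e0 := hE0 p
  have e1 := hE1 p
  have e2 := hE2 p
  constructor
  · rw [hderiv, hradon p]
    refine vec_eq_zero _ ?_ ?_ ?_
    · simp only [PiLp.add_apply, PiLp.smul_apply, smul_eq_mul, cross3_apply0, sum_single_apply]
      linear_combination (-(κ 1)) * e2 + κ 2 * e1 + κ 0 * hSD - D 0 p * hsum
    · simp only [PiLp.add_apply, PiLp.smul_apply, smul_eq_mul, cross3_apply1, sum_single_apply]
      linear_combination (-(κ 2)) * e0 + κ 0 * e2 + κ 1 * hSD - D 1 p * hsum
    · simp only [PiLp.add_apply, PiLp.smul_apply, smul_eq_mul, cross3_apply2, sum_single_apply]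
      linear_combination (-(κ 0)) * e1 + κ 1 * e0 + κ 2 * hSD - D 2 p * hsum
  · rw [hradon p]
    have : (inner ℝ κ (∑ i, (R i p) • EuclideanSpace.single i (1:ℝ)) : ℝ)
        = κ 0 * R 0 p + κ 1 * R 1 p + κ 2 * R 2 p := by
      simp [PiLp.inner_apply, RCLike.inner_apply, conj_trivial, Fin.sum_univ_three,
        sum_single_apply]
      ring
    rw [this]
    exact hS p
end
end

section
/- Let F : ℝ³ → ℝ³ be a Schwartz vector field, let x ∈ ℝ³ and let b ∈ ℝ³ be a unit vector. Let h : ℝ → ℝ be a measurable function satisfying the homogeneity h(a·p) = a⁻² h(p) for all a > 0 and p ∈ ℝ, and assume that y ↦ |F(x + y)|·|h(b·y)| is integrable on ℝ³. Then ∫_{S²} 𝒟F(θ, x) h(θ·b) dσ(θ) = ∫_ℝ F^R(p, b) h(p − b·x) dp. -/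
open MeasureTheory

noncomputable section

open Metric Set in
lemma aux_polar (G : E3 → E3) (hG : Integrable G) :
    ∫ y, G y = ∫ θ : sphere (0 : E3) 1,
      (∫ r in Set.Ioi (0 : ℝ), (r ^ 2) • G (r • (θ : E3))) ∂sphMeasure := by
  have hdim : Module.finrank ℝ E3 = 3 := finrank_euclideanSpace_fin
  have h0 : MeasurableSet ({0}ᶜ : Set E3) := (measurableSet_singleton 0).compl
  have e := Measure.measurePreserving_homeomorphUnitSphereProd (volume : Measure E3)
  set ν : Measure (Ioi (0:ℝ)) := Measure.volumeIoiPow (Module.finrank ℝ E3 - 1) with hν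
  have e' : MeasurePreserving (homeomorphUnitSphereProd E3).toMeasurableEquiv
      ((volume : Measure E3).comap Subtype.val) ((volume : Measure E3).toSphere.prod ν) := e
  have hint2 : Integrable (fun q : sphere (0:E3) 1 × Ioi (0:ℝ) => G ((q.2 : ℝ) • (q.1 : E3)))
      ((volume : Measure E3).toSphere.prod ν) := by
    have h1 : Integrable (fun y : ({0}ᶜ : Set E3) => G y)
        ((volume : Measure E3).comap Subtype.val) := by
      have := (MeasurableEmbedding.subtype_coe h0).integrable_map_iff
        (g := G) (μ := (volume : Measure E3).comap Subtype.val)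
      rw [map_comap_subtype_coe h0, restrict_compl_singleton] at this
      exact this.1 hG
    have h2 := (e'.symm _).integrable_comp_emb
      (homeomorphUnitSphereProd E3).toMeasurableEquiv.symm.measurableEmbedding
      (g := fun y : ({0}ᶜ : Set E3) => G y)
    have h3 := h2.2 h1
    refine h3.congr (Filter.Eventually.of_forall fun q => ?_)
    simp [Function.comp]
  calc ∫ y, G y = ∫ y in ({0}ᶜ : Set E3), G y := by rw [restrict_compl_singleton]
    _ = ∫ y : ({0}ᶜ : Set E3), G y ∂((volume : Measure E3).comap Subtype.val) :=
        (integral_subtype_comap h0 G).symm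
    _ = ∫ q : sphere (0:E3) 1 × Ioi (0:ℝ), G ((q.2 : ℝ) • (q.1 : E3))
          ∂((volume : Measure E3).toSphere.prod ν) := by
        rw [← e.integral_comp (Homeomorph.measurableEmbedding _)
          (fun q : sphere (0:E3) 1 × Ioi (0:ℝ) => G ((q.2 : ℝ) • (q.1 : E3)))]
        refine integral_congr_ae (Filter.Eventually.of_forall fun y => ?_)
        simp [smul_smul, mul_inv_cancel₀ (norm_ne_zero_iff.2 y.2)]
    _ = ∫ θ : sphere (0:E3) 1, (∫ r : Ioi (0:ℝ), G ((r : ℝ) • (θ : E3)) ∂ν)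
          ∂(volume : Measure E3).toSphere := integral_prod _ hint2
    _ = ∫ θ : sphere (0 : E3) 1,
          (∫ r in Set.Ioi (0 : ℝ), (r ^ 2) • G (r • (θ : E3))) ∂sphMeasure := by
        refine integral_congr_ae (Filter.Eventually.of_forall fun θ => ?_)
        rw [hν, hdim]
        show (∫ r : Ioi (0:ℝ), G ((r : ℝ) • (θ : E3)) ∂Measure.volumeIoiPow 2) = _
        simp only [Measure.volumeIoiPow, ENNReal.ofReal]
        rw [integral_withDensity_eq_integral_smul
          ((measurable_subtype_coe.pow_const _).real_toNNReal)]
        refine (integral_subtype_comap measurableSet_Ioi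
          (fun a : ℝ => (a ^ 2).toNNReal • G (a • (θ : E3)))).trans ?_
        refine setIntegral_congr_fun measurableSet_Ioi fun r hr => ?_
        rw [NNReal.smul_def, Real.coe_toNNReal _ (by positivity)]

open Metric Set Submodule in
lemma aux_slice (b : E3) (hb : ‖b‖ = 1) (G : E3 → E3) (hG : Integrable G) :
    ∫ y, G y = ∫ p : ℝ, ∫ z : (Submodule.span ℝ {b})ᗮ, G (p • b + (z : E3)) := by
  have hbne : b ≠ 0 := fun h => by simp [h] at hb
  set W := (Submodule.span ℝ {b})ᗮ with hWdef
  have hWrank : Module.finrank ℝ W = 2 := by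
    have h1 := (Submodule.span ℝ {b}).finrank_add_finrank_orthogonal
    rw [finrank_span_singleton hbne, finrank_euclideanSpace_fin, ← hWdef] at h1
    omega
  let o : OrthonormalBasis (Fin 2) ℝ W := (stdOrthonormalBasis ℝ W).reindex (finCongr hWrank)
  let v : Fin 3 → E3 := Fin.cons b (fun i => (o i : E3))
  have hbo : ∀ k : Fin 2, (inner ℝ b ((o k : E3)) : ℝ) = 0 := fun k =>
    (Submodule.mem_orthogonal _ _).1 (o k).2 b (Submodule.mem_span_singleton_self b)
  have hv : Orthonormal ℝ v := by
    constructor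
    · intro i
      induction i using Fin.cases with
      | zero => simpa [v] using hb
      | succ j => simp only [v, Fin.cons_succ]; exact o.orthonormal.1 j
    · intro i j hij
      induction i using Fin.cases with
      | zero =>
        induction j using Fin.cases with
        | zero => exact absurd rfl hij
        | succ j => simpa [v] using hbo j
      | succ i =>
        induction j using Fin.cases with
        | zero =>
          show (inner ℝ (o i : E3) b : ℝ) = 0
          rw [real_inner_comm]; exact hbo i
        | succ j =>
          have hij' : i ≠ j := fun h => hij (by rw [h])
          show (inner ℝ (o i : E3) (o j : E3) : ℝ) = 0
          rw [← Submodule.coe_inner]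
          exact o.orthonormal.2 hij'
  have hsp : ⊤ ≤ Submodule.span ℝ (Set.range v) :=
    le_of_eq (hv.linearIndependent.span_eq_top_of_card_eq_finrank
      (by simp [finrank_euclideanSpace_fin])).symm
  let B : OrthonormalBasis (Fin 3) ℝ E3 := OrthonormalBasis.mk hv hsp
  -- the measurable equivalence
  let e₁ : (ℝ × W) ≃ᵐ (ℝ × EuclideanSpace ℝ (Fin 2)) :=
    (MeasurableEquiv.refl ℝ).prodCongr o.measurableEquiv
  let e₂ : (ℝ × EuclideanSpace ℝ (Fin 2)) ≃ᵐ (ℝ × (Fin 2 → ℝ)) :=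
    (MeasurableEquiv.refl ℝ).prodCongr (MeasurableEquiv.toLp 2 (Fin 2 → ℝ)).symm
  let e₃ : (ℝ × (Fin 2 → ℝ)) ≃ᵐ (Fin 3 → ℝ) :=
    (MeasurableEquiv.piFinSuccAbove (fun _ : Fin 3 => ℝ) 0).symm
  let e₄ : (Fin 3 → ℝ) ≃ᵐ EuclideanSpace ℝ (Fin 3) :=
    ((MeasurableEquiv.toLp 2 (Fin 3 → ℝ)).symm).symm
  let e₅ : EuclideanSpace ℝ (Fin 3) ≃ᵐ E3 := B.measurableEquiv.symm
  let Φ : (ℝ × W) ≃ᵐ E3 := (((e₁.trans e₂).trans e₃).trans e₄).trans e₅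
  have mpΦ : MeasurePreserving Φ volume volume := by
    have m1 : MeasurePreserving e₁ volume volume := by
      rw [Measure.volume_eq_prod, Measure.volume_eq_prod]
      exact (MeasurePreserving.id _).prod o.measurePreserving_measurableEquiv
    have m2 : MeasurePreserving e₂ volume volume := by
      rw [Measure.volume_eq_prod, Measure.volume_eq_prod]
      exact (MeasurePreserving.id _).prod (EuclideanSpace.volume_preserving_symm_measurableEquiv_toLp (Fin 2))
    have m3 : MeasurePreserving e₃ volume volume := by
      have := (measurePreserving_piFinSuccAbove (fun _ : Fin 3 => (volume : Measure ℝ)) 0).symm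
      rw [Measure.volume_eq_prod, volume_pi, volume_pi (α := fun _ : Fin 3 => ℝ)]
      convert this using 2
    have m4 : MeasurePreserving e₄ volume volume :=
      (EuclideanSpace.volume_preserving_symm_measurableEquiv_toLp (Fin 3)).symm
    have m5 : MeasurePreserving e₅ volume volume :=
      B.measurePreserving_measurableEquiv.symm
    exact ((((m5.comp m4).comp m3).comp m2).comp m1 : )
  have hΦ : ∀ (p : ℝ) (z : W), Φ (p, z) = p • b + (z : E3) := by
    intro p z
    have h1 : Φ (p, z)
        = B.repr.symm ((EuclideanSpace.equiv (Fin 3) ℝ).symm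
            (Fin.insertNth 0 p (fun i => o.repr z i))) := rfl
    rw [h1, ← B.sum_repr_symm]
    have h2 : ∀ i : Fin 3, ((EuclideanSpace.equiv (Fin 3) ℝ).symm
        (Fin.insertNth 0 p (fun i => o.repr z i))) i
        = (Fin.cons p (fun i => o.repr z i) : Fin 3 → ℝ) i := by
      intro i
      simp [Fin.insertNth_zero']
    simp only [h2]
    rw [Fin.sum_univ_succ]
    have h3 : ∀ i : Fin 3, B i = v i := fun i => congrFun (OrthonormalBasis.coe_mk hv hsp) i
    simp only [h3, Fin.cons_zero, Fin.cons_succ, v]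
    congr 1
    have h4 : (((∑ i, o.repr z i • o i : W)) : E3) = ∑ i, o.repr z i • (o i : E3) := by
      push_cast
      rfl
    rw [← h4, o.sum_repr_symm, o.repr.symm_apply_apply]
  have hGΦ : Integrable (fun q : ℝ × W => G (Φ q)) (volume.prod volume) := by
    rw [← Measure.volume_eq_prod]
    exact (mpΦ.integrable_comp_emb Φ.measurableEmbedding).2 hG
  calc ∫ y, G y = ∫ q : ℝ × W, G (Φ q) := (mpΦ.integral_comp' G).symm
    _ = ∫ p : ℝ, ∫ z : W, G (Φ (p, z)) := by
        rw [Measure.volume_eq_prod]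
        exact integral_prod _ hGΦ
    _ = ∫ p : ℝ, ∫ z : W, G (p • b + (z : E3)) := by simp_rw [hΦ]


/-- the fundamental identity of mathematical tomography relating the
Divergent beam transform and the Radon transform through a `(-2)`-homogeneous
distribution kernel `h`. -/
theorem dbeam_radon_identity (F : E3 → E3) (hF : IsSchwartzField F)
    (x b : E3) (hb : ‖b‖ = 1) (h : ℝ → ℝ) (hmeas : Measurable h)
    (hhom : ∀ a p : ℝ, 0 < a → h (a * p) = (a ^ 2)⁻¹ * h p)
    (hint : Integrable (fun y : E3 => ‖F (x + y)‖ * |h (inner ℝ b y : ℝ)|)) :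
    (∫ θ : Metric.sphere (0 : E3) 1, h (inner ℝ (θ : E3) b : ℝ) • dbeam F (θ : E3) x ∂sphMeasure)
      = ∫ p : ℝ, h (p - (inner ℝ b x : ℝ)) • radon F p b := by
  classical
  -- the function to which we apply both coordinate changes
  set G : E3 → E3 := fun y => h (inner ℝ b y : ℝ) • F (x + y) with hGdef
  have hFc : Continuous F := by
    choose g hg using hF
    have hFe : F = fun y => (EuclideanSpace.equiv (Fin 3) ℝ).symm (fun i => g i y) := by
      funext y
      ext i
      simpa using hg i y
    rw [hFe]
    exact (EuclideanSpace.equiv (Fin 3) ℝ).symm.continuous.comp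
      (continuous_pi fun i => (g i).continuous)
  have hGm : AEStronglyMeasurable G volume := by
    have h1 : Measurable fun y : E3 => h (inner ℝ b y : ℝ) :=
      hmeas.comp (continuous_const.inner continuous_id).measurable
    exact h1.aestronglyMeasurable.smul
      ((hFc.comp (continuous_const.add continuous_id)).aestronglyMeasurable)
  have hGint : Integrable G := by
    refine hint.mono' hGm (Filter.Eventually.of_forall fun y => ?_)
    rw [hGdef]
    simp only [norm_smul, Real.norm_eq_abs]
    rw [mul_comm]
  have L := aux_polar G hGint
  have R := aux_slice b hb G hGint
  set W := (Submodule.span ℝ {b})ᗮ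
  set q0 : ℝ := (inner ℝ b x : ℝ) with hq0
  -- identify the polar side with the divergent beam transform
  have hθ : ∀ θ : Metric.sphere (0 : E3) 1,
      (∫ r in Set.Ioi (0 : ℝ), (r ^ 2) • G (r • (θ : E3)))
        = h (inner ℝ ((θ : E3)) b : ℝ) • dbeam F (θ : E3) x := by
    intro θ
    have h1 : ∀ r ∈ Set.Ioi (0 : ℝ),
        (r ^ 2) • G (r • (θ : E3)) = h (inner ℝ ((θ : E3)) b : ℝ) • F (x + r • (θ : E3)) := by
      intro r hr
      have hr0 : (0 : ℝ) < r := hr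
      rw [hGdef]
      simp only
      rw [real_inner_smul_right, hhom r _ hr0, real_inner_comm (θ : E3) b, smul_smul,
        mul_inv_cancel_left₀ (by positivity)]
    rw [setIntegral_congr_fun measurableSet_Ioi h1, integral_smul]
    rfl
  -- identify the slice side with the Radon transform
  have hp : ∀ p : ℝ, (∫ z : W, G (p • b + (z : E3))) = h p • radon F (p + q0) b := by
    intro p
    have hz0 : ∀ z : W, (inner ℝ b ((z : E3)) : ℝ) = 0 := fun z =>
      (Submodule.mem_orthogonal _ _).1 z.2 b (Submodule.mem_span_singleton_self b)
    have h1 : ∀ z : W, G (p • b + (z : E3)) = h p • F (x + (p • b + (z : E3))) := by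
      intro z
      rw [hGdef]
      simp only
      rw [inner_add_right, real_inner_smul_right, hz0 z, real_inner_self_eq_norm_sq, hb]
      norm_num
    simp_rw [h1, integral_smul]
    congr 1
    have hx' : x - q0 • b ∈ W :=
      Submodule.mem_orthogonal_singleton_iff_inner_right.2
        (by rw [inner_sub_right, real_inner_smul_right, real_inner_self_eq_norm_sq, hb, hq0]; ring)
    have h2 : ∀ z : W, x + (p • b + (z : E3))
        = (p + q0) • b + (((⟨x - q0 • b, hx'⟩ : W) + z : W) : E3) := by
      intro z
      push_cast
      rw [add_smul]
      abel
    simp_rw [h2]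
    have h3 := integral_add_left_eq_self (μ := (volume : Measure W))
      (fun w : W => F ((p + q0) • b + (w : E3))) (⟨x - q0 • b, hx'⟩ : W)
    exact h3.trans rfl
  calc (∫ θ : Metric.sphere (0 : E3) 1,
        h (inner ℝ (θ : E3) b : ℝ) • dbeam F (θ : E3) x ∂sphMeasure)
      = ∫ θ : Metric.sphere (0 : E3) 1,
          (∫ r in Set.Ioi (0 : ℝ), (r ^ 2) • G (r • (θ : E3))) ∂sphMeasure :=
        (integral_congr_ae (Filter.Eventually.of_forall hθ)).symm
    _ = ∫ y, G y := L.symm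
    _ = ∫ p : ℝ, ∫ z : W, G (p • b + (z : E3)) := R
    _ = ∫ p : ℝ, h p • radon F (p + q0) b :=
        integral_congr_ae (Filter.Eventually.of_forall hp)
    _ = ∫ p : ℝ, h (p - q0) • radon F p b := by
        have h4 := integral_add_right_eq_self (μ := (volume : Measure ℝ))
          (fun p : ℝ => h (p - q0) • radon F p b) q0
        rw [← h4]
        refine integral_congr_ae (Filter.Eventually.of_forall fun p => ?_)
        simp
end
end

section
/- Fourier slice-projection theorem for the X-ray transform: let F : ℝ³ → ℝ³ be a Schwartz vector field, let θ ∈ ℝ³ be a unit vector, and let ξ ∈ ℝ³ satisfy ξ·θ = 0. Then ∫_{v ∈ θ⊥} e^{−i ξ·v} 𝒳F(θ, v) dv = ∫_{ℝ³} e^{−i ξ·x} F(x) dx, where the left-hand integral is taken with respect to the 2-dimensional Lebesgue measure on the plane θ⊥. -/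
open MeasureTheory

noncomputable section

section AuxSlice

variable {E : Type*} [NormedAddCommGroup E] [InnerProductSpace ℝ E]
  [FiniteDimensional ℝ E] [MeasurableSpace E] [BorelSpace E]

lemma measurePreserving_orthAdd (K : Submodule ℝ E) :
    MeasurePreserving (fun p : Kᗮ × K => (p.1 : E) + (p.2 : E))
      (volume.prod volume) volume := by
  classical
  set m := Module.finrank ℝ (Kᗮ : Submodule ℝ E) with hm
  set n := Module.finrank ℝ K with hn
  let b : OrthonormalBasis (Fin m) ℝ Kᗮ := stdOrthonormalBasis ℝ Kᗮ
  let c : OrthonormalBasis (Fin n) ℝ K := stdOrthonormalBasis ℝ K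
  let w : Fin m ⊕ Fin n → E := Sum.elim (fun i => (b i : E)) (fun j => (c j : E))
  have hbc : ∀ (x : Kᗮ) (y : K), (inner ℝ (x : E) (y : E) : ℝ) = 0 := fun x y =>
    Submodule.inner_left_of_mem_orthogonal y.2 x.2
  have hw_on : Orthonormal ℝ w := by
    constructor
    · rintro (i | j)
      · exact b.orthonormal.1 i
      · exact c.orthonormal.1 j
    · rintro (i | i) (j | j) hij
      · exact b.orthonormal.2 (fun h => hij (by simp [h]))
      · exact hbc _ _
      · rw [real_inner_comm]; exact hbc _ _
      · exact c.orthonormal.2 (fun h => hij (by simp [h]))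
  have hw_sp : ⊤ ≤ Submodule.span ℝ (Set.range w) := by
    have h1 : Submodule.span ℝ (Set.range w)
        = Submodule.span ℝ (Set.range fun i => (b i : E))
          ⊔ Submodule.span ℝ (Set.range fun j => (c j : E)) := by
      rw [← Submodule.span_union, ← Set.Sum.elim_range]
    have hb : Submodule.span ℝ (Set.range fun i => (b i : E)) = Kᗮ := by
      have : (Set.range fun i => (b i : E)) = (Kᗮ.subtype) '' Set.range b := by
        rw [← Set.range_comp]; rfl
      rw [this, ← Submodule.map_span, ← OrthonormalBasis.coe_toBasis, b.toBasis.span_eq,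
        Submodule.map_subtype_top]
    have hc : Submodule.span ℝ (Set.range fun j => (c j : E)) = K := by
      have : (Set.range fun j => (c j : E)) = (K.subtype) '' Set.range c := by
        rw [← Set.range_comp]; rfl
      rw [this, ← Submodule.map_span, ← OrthonormalBasis.coe_toBasis, c.toBasis.span_eq,
        Submodule.map_subtype_top]
    rw [h1, hb, hc, sup_comm, Submodule.sup_orthogonal_of_hasOrthogonalProjection]
  let d : OrthonormalBasis (Fin m ⊕ Fin n) ℝ E := OrthonormalBasis.mk hw_on hw_sp
  have h1 : MeasurePreserving (fun p : Kᗮ × K => (b.repr p.1, c.repr p.2))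
      (volume.prod volume) (volume.prod volume) :=
    b.measurePreserving_repr.prod c.measurePreserving_repr
  have h2 : MeasurePreserving
      (fun q : EuclideanSpace ℝ (Fin m) × EuclideanSpace ℝ (Fin n) =>
        ((MeasurableEquiv.toLp 2 (Fin m → ℝ)).symm q.1, (MeasurableEquiv.toLp 2 (Fin n → ℝ)).symm q.2))
      (volume.prod volume) (volume.prod volume) :=
    (EuclideanSpace.volume_preserving_symm_measurableEquiv_toLp _).prod
      (EuclideanSpace.volume_preserving_symm_measurableEquiv_toLp _)
  have h3 := volume_measurePreserving_sumPiEquivProdPi_symm (fun _ : Fin m ⊕ Fin n => ℝ)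
  have h4 := (EuclideanSpace.volume_preserving_symm_measurableEquiv_toLp (Fin m ⊕ Fin n)).symm
  have h5 := d.measurePreserving_repr_symm
  have hcomp := h5.comp (h4.comp (h3.comp (h2.comp h1)))
  have hfun : (⇑d.repr.symm ∘ ⇑((MeasurableEquiv.toLp 2 (Fin m ⊕ Fin n → ℝ)).symm).symm ∘
      ⇑(MeasurableEquiv.sumPiEquivProdPi fun _ : Fin m ⊕ Fin n => ℝ).symm ∘
      (fun q : EuclideanSpace ℝ (Fin m) × EuclideanSpace ℝ (Fin n) =>
        ((MeasurableEquiv.toLp 2 (Fin m → ℝ)).symm q.1, (MeasurableEquiv.toLp 2 (Fin n → ℝ)).symm q.2)) ∘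
      (fun p : Kᗮ × K => (b.repr p.1, c.repr p.2)))
      = fun p : Kᗮ × K => (p.1 : E) + (p.2 : E) := by
    funext p
    apply d.repr.injective
    simp only [Function.comp_apply, LinearIsometryEquiv.apply_symm_apply]
    ext j
    rw [d.repr_apply_apply]
    have hdj : ∀ j, d j = w j := fun j => congrFun (OrthonormalBasis.coe_mk hw_on hw_sp) j
    cases j with
    | inl i =>
        have : (((MeasurableEquiv.toLp 2 (Fin m ⊕ Fin n → ℝ)).symm).symm
            ((MeasurableEquiv.sumPiEquivProdPi fun _ : Fin m ⊕ Fin n => ℝ).symm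
              ((MeasurableEquiv.toLp 2 (Fin m → ℝ)).symm (b.repr p.1),
               (MeasurableEquiv.toLp 2 (Fin n → ℝ)).symm (c.repr p.2)))) (Sum.inl i)
            = b.repr p.1 i := rfl
        rw [this, hdj _]
        simp only [w, Sum.elim_inl]
        rw [inner_add_right, ← Submodule.coe_inner, ← b.repr_apply_apply]
        rw [hbc _ _, add_zero]
    | inr i =>
        have : (((MeasurableEquiv.toLp 2 (Fin m ⊕ Fin n → ℝ)).symm).symm
            ((MeasurableEquiv.sumPiEquivProdPi fun _ : Fin m ⊕ Fin n => ℝ).symm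
              ((MeasurableEquiv.toLp 2 (Fin m → ℝ)).symm (b.repr p.1),
               (MeasurableEquiv.toLp 2 (Fin n → ℝ)).symm (c.repr p.2)))) (Sum.inr i)
            = c.repr p.2 i := rfl
        rw [this, hdj _]
        simp only [w, Sum.elim_inr]
        rw [inner_add_right, ← Submodule.coe_inner, ← c.repr_apply_apply]
        rw [show (inner ℝ ((c i : E)) ((p.1 : Kᗮ) : E) : ℝ) = 0 from by
          rw [real_inner_comm]; exact hbc _ _, zero_add]
  rwa [hfun] at hcomp

lemma measurePreserving_lineAdd (θ : E) (hθ : ‖θ‖ = 1) :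
    MeasurePreserving (fun p : (Submodule.span ℝ {θ})ᗮ × ℝ => (p.1 : E) + p.2 • θ)
      (volume.prod volume) volume := by
  set K := Submodule.span ℝ {θ}
  let iso : ℝ ≃ₗᵢ[ℝ] K := LinearIsometryEquiv.toSpanUnitSingleton (𝕜 := ℝ) θ hθ
  have h1 : MeasurePreserving (fun p : Kᗮ × ℝ => (p.1, iso p.2))
      (volume.prod volume) (volume.prod volume) :=
    (MeasurePreserving.id volume).prod iso.measurePreserving
  have h2 := (measurePreserving_orthAdd K).comp h1
  have : ((fun p : Kᗮ × K => (p.1 : E) + (p.2 : E)) ∘ fun p : Kᗮ × ℝ => (p.1, iso p.2))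
      = fun p : Kᗮ × ℝ => (p.1 : E) + p.2 • θ := by
    funext p
    rfl
  rwa [this] at h2

lemma measurableEmbedding_lineAdd (θ : E) (hθ : θ ≠ 0) :
    MeasurableEmbedding (fun p : (Submodule.span ℝ {θ})ᗮ × ℝ => (p.1 : E) + p.2 • θ) := by
  set K := Submodule.span ℝ {θ}
  have hcompl : IsCompl Kᗮ K := (Submodule.isCompl_orthogonal_of_hasOrthogonalProjection (K := K)).symm
  let e₁ : (Kᗮ × ℝ) ≃ₗ[ℝ] (Kᗮ × K) :=
    (LinearEquiv.refl ℝ Kᗮ).prodCongr (LinearEquiv.toSpanNonzeroSingleton ℝ E θ hθ)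
  let e₂ : (Kᗮ × K) ≃ₗ[ℝ] E := Submodule.prodEquivOfIsCompl Kᗮ K hcompl
  let e : (Kᗮ × ℝ) ≃L[ℝ] E := (e₁.trans e₂).toContinuousLinearEquiv
  have he : ⇑e = fun p : Kᗮ × ℝ => (p.1 : E) + p.2 • θ := by
    funext p
    show e₂ (e₁ p) = _
    rfl
  rw [← he]
  exact e.toHomeomorph.toMeasurableEquiv.measurableEmbedding

lemma schwartz_bound (g : SchwartzMap E ℝ) :
    ∃ C, 0 ≤ C ∧ ∀ x, ‖g x‖ ≤ C * (1 + ‖x‖ ^ 2)⁻¹ := by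
  obtain ⟨C0, -, h0⟩ := g.decay 0 0
  obtain ⟨C2, -, h2⟩ := g.decay 2 0
  refine ⟨C0 + C2, ?_, fun x => ?_⟩
  · have := h0 0
    simp only [norm_iteratedFDeriv_zero, pow_zero, one_mul] at this
    have := h2 0
    simp only [norm_iteratedFDeriv_zero] at this
    nlinarith [norm_nonneg (g (0 : E)), norm_nonneg ((0 : E))]
  · have hx0 := h0 x
    have hx2 := h2 x
    simp only [norm_iteratedFDeriv_zero, pow_zero, one_mul] at hx0 hx2
    have hpos : (0 : ℝ) < 1 + ‖x‖ ^ 2 := by positivity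
    rw [← div_eq_mul_inv, le_div_iff₀ hpos]
    nlinarith [norm_nonneg (g x)]

lemma line_integrable (g : SchwartzMap E ℝ) (θ : E) (hθ : ‖θ‖ = 1)
    (v : E) (hv : v ∈ (Submodule.span ℝ {θ})ᗮ) :
    Integrable (fun s : ℝ => g (v + s • θ)) := by
  obtain ⟨C, hC0, hC⟩ := schwartz_bound g
  have key : ∀ s : ℝ, ‖g (v + s • θ)‖ ≤ C * (1 + s ^ 2)⁻¹ := by
    intro s
    refine (hC _).trans ?_
    have hinner : (inner ℝ v (s • θ) : ℝ) = 0 := by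
      rw [real_inner_smul_right,
        Submodule.inner_left_of_mem_orthogonal (Submodule.mem_span_singleton_self θ) hv, mul_zero]
    have hn : ‖v + s • θ‖ ^ 2 = ‖v‖ ^ 2 + ‖s • θ‖ ^ 2 := by
      rw [norm_add_sq_real, hinner]
      ring
    have hs2 : s ^ 2 ≤ ‖v + s • θ‖ ^ 2 := by
      rw [hn, norm_smul, hθ, mul_one, Real.norm_eq_abs, sq_abs]
      nlinarith [norm_nonneg v]
    gcongr
  refine (integrable_inv_one_add_sq.const_mul C).mono' ?_ (Filter.Eventually.of_forall key)
  exact (g.continuous.comp (by continuity)).aestronglyMeasurable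

lemma e3_norm_le_sum (x : EuclideanSpace ℝ (Fin 3)) : ‖x‖ ≤ ∑ j, ‖x j‖ := by
  rw [EuclideanSpace.norm_eq]
  have h1 : ∑ j, ‖x j‖ ^ 2 ≤ (∑ j, ‖x j‖) ^ 2 :=
    Finset.sum_sq_le_sq_sum_of_nonneg fun j _ => norm_nonneg _
  calc Real.sqrt (∑ j, ‖x j‖ ^ 2) ≤ Real.sqrt ((∑ j, ‖x j‖) ^ 2) := Real.sqrt_le_sqrt h1
    _ = ∑ j, ‖x j‖ := Real.sqrt_sq (by positivity)


end AuxSlice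

set_option maxHeartbeats 1000000

/-- Fourier slice-projection theorem for the X-ray transform
(stated componentwise; both sides are vectors in ℂ³). -/
theorem fourier_slice_projection (F : E3 → E3) (hF : IsSchwartzField F)
    (θ : E3) (hθ : ‖θ‖ = 1) (ξ : E3) (hξ : (inner ℝ ξ θ : ℝ) = 0) (i : Fin 3) :
    (∫ v : (Submodule.span ℝ {θ})ᗮ,
        Complex.exp (-(Complex.I * ((inner ℝ ξ (v : E3) : ℝ) : ℂ))) * (xray F θ (v : E3) i : ℂ))
      = ∫ y : E3, Complex.exp (-(Complex.I * ((inner ℝ ξ y : ℝ) : ℂ))) * (F y i : ℂ) := by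
  classical
  set K := Submodule.span ℝ {θ} with hK
  choose G hG using hF
  have hθ0 : θ ≠ 0 := fun h => by simp [h] at hθ
  have hFcont : Continuous F := by
    have hFeq : F = fun x => (EuclideanSpace.equiv (Fin 3) ℝ).symm (fun j => G j x) := by
      funext x
      ext j
      simpa using hG j x
    rw [hFeq]
    exact (EuclideanSpace.equiv (Fin 3) ℝ).symm.continuous.comp
      (continuous_pi fun j => (G j).continuous)
  set g := G i with hgdef
  set f : E3 → ℂ := fun y => Complex.exp (-(Complex.I * ((inner ℝ ξ y : ℝ) : ℂ))) * (g y : ℂ)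
    with hf
  have hphase_cont : Continuous fun y : E3 =>
      Complex.exp (-(Complex.I * ((inner ℝ ξ y : ℝ) : ℂ))) :=
    Complex.continuous_exp.comp ((continuous_const.mul (Complex.continuous_ofReal.comp
      (continuous_const.inner continuous_id))).neg)
  have hphase_norm : ∀ r : ℝ, ‖Complex.exp (-(Complex.I * (r : ℂ)))‖ = 1 := by
    intro r
    rw [Complex.norm_exp]
    simp
  have hfint : Integrable f := by
    refine (g.integrable.ofReal (𝕜 := ℂ)).bdd_mul hphase_cont.aestronglyMeasurable (c := 1) (Filter.Eventually.of_forall fun y => ?_)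
    exact le_of_eq (hphase_norm _)
  have hΦmp := measurePreserving_lineAdd θ hθ
  have hΦemb := measurableEmbedding_lineAdd θ hθ0
  have hfΦint : Integrable (fun p : Kᗮ × ℝ => f ((p.1 : E3) + p.2 • θ))
      (volume.prod volume) := (hΦmp.integrable_comp_emb hΦemb).2 hfint
  have hRHSeq : (∫ p : Kᗮ × ℝ, f ((p.1 : E3) + p.2 • θ) ∂(volume.prod volume))
      = ∫ y : E3, f y := hΦmp.integral_comp hΦemb f
  have hfub := MeasureTheory.integral_prod _ hfΦint
  have hvline : ∀ v : Kᗮ, (∫ s : ℝ, f ((v : E3) + s • θ))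
      = Complex.exp (-(Complex.I * ((inner ℝ ξ (v : E3) : ℝ) : ℂ))) * (xray F θ (v : E3) i : ℂ) := by
    intro v
    have hline : ∀ j, Integrable (fun s : ℝ => G j ((v : E3) + s • θ)) :=
      fun j => line_integrable (G j) θ hθ _ v.2
    have hint_vec : Integrable (fun s : ℝ => F ((v : E3) + s • θ)) := by
      refine Integrable.mono' (integrable_finset_sum Finset.univ fun j _ => (hline j).norm)
        ((hFcont.comp (continuous_const.add (continuous_id.smul continuous_const))).aestronglyMeasurable)
        (Filter.Eventually.of_forall fun s => ?_)
      calc ‖F ((v : E3) + s • θ)‖ ≤ ∑ j, ‖F ((v : E3) + s • θ) j‖ := e3_norm_le_sum _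
        _ = ∑ j, ‖G j ((v : E3) + s • θ)‖ := by simp_rw [hG]
    have hx : (xray F θ (v : E3)) i = ∫ s : ℝ, g ((v : E3) + s • θ) := by
      calc (xray F θ (v : E3)) i
          = EuclideanSpace.proj (𝕜 := ℝ) i (∫ s : ℝ, F ((v : E3) + s • θ)) := rfl
        _ = ∫ s : ℝ, EuclideanSpace.proj (𝕜 := ℝ) i (F ((v : E3) + s • θ)) :=
            (ContinuousLinearMap.integral_comp_comm _ hint_vec).symm
        _ = ∫ s : ℝ, g ((v : E3) + s • θ) := by
            refine integral_congr_ae (Filter.Eventually.of_forall fun s => ?_)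
            simp [hG i, hgdef]
    have hph : ∀ s : ℝ, (inner ℝ ξ ((v : E3) + s • θ) : ℝ) = (inner ℝ ξ (v : E3) : ℝ) := by
      intro s
      rw [inner_add_right, real_inner_smul_right, hξ, mul_zero, add_zero]
    calc (∫ s : ℝ, f ((v : E3) + s • θ))
        = ∫ s : ℝ, Complex.exp (-(Complex.I * ((inner ℝ ξ (v : E3) : ℝ) : ℂ)))
            * (g ((v : E3) + s • θ) : ℂ) := by
          refine integral_congr_ae (Filter.Eventually.of_forall fun s => ?_)
          rw [hf]; dsimp only; rw [hph s]
      _ = Complex.exp (-(Complex.I * ((inner ℝ ξ (v : E3) : ℝ) : ℂ)))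
            * ∫ s : ℝ, (g ((v : E3) + s • θ) : ℂ) := integral_const_mul _ _
      _ = Complex.exp (-(Complex.I * ((inner ℝ ξ (v : E3) : ℝ) : ℂ)))
            * ((∫ s : ℝ, g ((v : E3) + s • θ) : ℝ) : ℂ) := by
            congr 1
            exact integral_ofReal (𝕜 := ℂ)
      _ = _ := by rw [hx]
  calc (∫ v : Kᗮ, Complex.exp (-(Complex.I * ((inner ℝ ξ (v : E3) : ℝ) : ℂ)))
          * (xray F θ (v : E3) i : ℂ))
      = ∫ v : Kᗮ, ∫ s : ℝ, f ((v : E3) + s • θ) := by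
        refine integral_congr_ae (Filter.Eventually.of_forall fun v => ?_)
        exact (hvline v).symm
    _ = ∫ p : Kᗮ × ℝ, f ((p.1 : E3) + p.2 • θ) ∂(volume.prod volume) := hfub.symm
    _ = ∫ y : E3, f y := hRHSeq
    _ = ∫ y : E3, Complex.exp (-(Complex.I * ((inner ℝ ξ y : ℝ) : ℂ))) * (F y i : ℂ) := by
        refine integral_congr_ae (Filter.Eventually.of_forall fun y => ?_)
        rw [hf]; dsimp only; rw [hG i y]
end
end

section
/- Let ν ∈ ℝ, ν ≠ 0, and let F : ℝ³ → ℝ³ be a Schwartz vector field satisfying curl F = ν F. Then for every unit vector θ, the X-ray transform is again Trkalian in the variable x: curl_x 𝒳F(θ, x) = ν 𝒳F(θ, x) and div_x 𝒳F(θ, x) = 0 for all x ∈ ℝ³; moreover, extending 𝒳F to all θ ∈ ℝ³ \ {0} by the same formula, div_θ 𝒳F(θ, x) = 0. -/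
open MeasureTheory

noncomputable section

variable {V : Type*} [NormedAddCommGroup V] [NormedSpace ℝ V]

lemma schwartz_decay_bound (u : SchwartzMap E3 V) (k : ℕ) :
    ∃ C, 0 ≤ C ∧ ∀ y, (1 + ‖y‖) ^ k * ‖u y‖ ≤ C := by
  refine ⟨2 ^ k * (Finset.Iic (k, 0)).sup (fun m => SchwartzMap.seminorm ℝ m.1 m.2) u,
    by positivity, fun y => ?_⟩
  have := SchwartzMap.one_add_le_sup_seminorm_apply (𝕜 := ℝ) (m := (k, 0)) le_rfl le_rfl u y
  simpa [norm_iteratedFDeriv_zero] using this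

lemma line_arg_norm (x θ : E3) (s : ℝ) : ‖θ‖ * |s| - ‖x‖ ≤ ‖x + s • θ‖ := by
  have h : ‖s • θ‖ ≤ ‖x + s • θ‖ + ‖x‖ := by
    calc ‖s • θ‖ = ‖(x + s • θ) + (-x)‖ := by rw [add_neg_cancel_comm]
    _ ≤ ‖x + s • θ‖ + ‖x‖ := by simpa using norm_add_le (x + s • θ) (-x)
  rw [norm_smul] at h
  simp only [Real.norm_eq_abs] at h
  linarith [mul_comm ‖θ‖ |s|]

lemma master_bound (u : SchwartzMap E3 V) (k : ℕ) (a R : ℝ) (ha : 0 < a) (hR : 0 ≤ R) :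
    ∃ C, 0 ≤ C ∧ ∀ (y : E3) (s : ℝ), a * |s| - R ≤ ‖y‖ → (1 + |s|) ^ k * ‖u y‖ ≤ C := by
  obtain ⟨C, hC0, hC⟩ := schwartz_decay_bound u k
  set m := min a 1 with hm
  have hm0 : 0 < m := lt_min ha one_pos
  refine ⟨((1 + R) / m) ^ k * C, by positivity, fun y s hy => ?_⟩
  have key : 1 + |s| ≤ ((1 + R) / m) * (1 + ‖y‖) := by
    rw [div_mul_eq_mul_div, le_div_iff₀ hm0]
    have h1 : m ≤ 1 := min_le_right a 1
    have h2 : m ≤ a := min_le_left a 1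
    have h3 : 0 ≤ |s| := abs_nonneg s
    have h4 : 0 ≤ ‖y‖ := norm_nonneg y
    nlinarith [hy]
  have h5 : (0:ℝ) ≤ 1 + |s| := by positivity
  calc (1 + |s|) ^ k * ‖u y‖ ≤ (((1 + R) / m) * (1 + ‖y‖)) ^ k * ‖u y‖ := by
        have := h5.trans key
        gcongr
    _ = ((1 + R) / m) ^ k * ((1 + ‖y‖) ^ k * ‖u y‖) := by rw [mul_pow]; ring
    _ ≤ ((1 + R) / m) ^ k * C := by
        have : (0:ℝ) ≤ ((1 + R) / m) ^ k := by positivity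
        exact mul_le_mul_of_nonneg_left (hC y) this

variable {V : Type*} [NormedAddCommGroup V] [NormedSpace ℝ V]

lemma cont_line (u : SchwartzMap E3 V) (θ x : E3) :
    Continuous fun s : ℝ => u (x + s • θ) :=
  u.continuous.comp (by continuity)

lemma integrable_line (u : SchwartzMap E3 V) {θ : E3} (hθ : θ ≠ 0) (x : E3) :
    Integrable fun s : ℝ => u (x + s • θ) := by
  obtain ⟨C, hC0, hC⟩ := master_bound u 2 ‖θ‖ ‖x‖ (norm_pos_iff.2 hθ) (norm_nonneg x)
  refine Integrable.mono' ((integrable_inv_one_add_sq).const_mul C)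
    (cont_line u θ x).aestronglyMeasurable (Filter.Eventually.of_forall fun s => ?_)
  have h1 := hC (x + s • θ) s (line_arg_norm x θ s)
  have h2 : 1 + s ^ 2 ≤ (1 + |s|) ^ 2 := by nlinarith [abs_nonneg s, sq_abs s]
  have h3 : (0:ℝ) < 1 + s ^ 2 := by positivity
  have h4 : ‖u (x + s • θ)‖ * (1 + s ^ 2) ≤ C := by
    calc ‖u (x + s • θ)‖ * (1 + s ^ 2) ≤ ‖u (x + s • θ)‖ * (1 + |s|) ^ 2 := by gcongr
      _ ≤ C := by rw [mul_comm]; exact h1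
  calc ‖u (x + s • θ)‖ = ‖u (x + s • θ)‖ * (1 + s ^ 2) * (1 + s ^ 2)⁻¹ := by field_simp
    _ ≤ C * (1 + s ^ 2)⁻¹ := by gcongr

lemma integrable_line_smul (u : SchwartzMap E3 V) {θ : E3} (hθ : θ ≠ 0) (x : E3) :
    Integrable fun s : ℝ => s • u (x + s • θ) := by
  obtain ⟨C, hC0, hC⟩ := master_bound u 3 ‖θ‖ ‖x‖ (norm_pos_iff.2 hθ) (norm_nonneg x)
  refine Integrable.mono' ((integrable_inv_one_add_sq).const_mul C)
    ((continuous_id.smul (cont_line u θ x)).aestronglyMeasurable)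
    (Filter.Eventually.of_forall fun s => ?_)
  have h1 := hC (x + s • θ) s (line_arg_norm x θ s)
  have h2 : |s| * (1 + s ^ 2) ≤ (1 + |s|) ^ 3 := by nlinarith [abs_nonneg s, sq_abs s]
  have hn : 0 ≤ ‖u (x + s • θ)‖ := norm_nonneg _
  have h4 : ‖s • u (x + s • θ)‖ * (1 + s ^ 2) ≤ C := by
    rw [norm_smul, Real.norm_eq_abs]
    calc |s| * ‖u (x + s • θ)‖ * (1 + s ^ 2) = |s| * (1 + s ^ 2) * ‖u (x + s • θ)‖ := by ring
      _ ≤ (1 + |s|) ^ 3 * ‖u (x + s • θ)‖ := by gcongr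
      _ ≤ C := h1
  have h3 : (0:ℝ) < 1 + s ^ 2 := by positivity
  calc ‖s • u (x + s • θ)‖ = ‖s • u (x + s • θ)‖ * (1 + s ^ 2) * (1 + s ^ 2)⁻¹ := by field_simp
    _ ≤ C * (1 + s ^ 2)⁻¹ := by gcongr

lemma fderiv_line_eq (g : SchwartzMap E3 ℝ) :
    ∀ y, fderiv ℝ g y = SchwartzMap.fderivCLM ℝ E3 ℝ g y :=
  fun y => (SchwartzMap.fderivCLM_apply ℝ g y).symm

lemma hasFDerivAt_line (g : SchwartzMap E3 ℝ) (θ : E3) (s : ℝ) (x : E3) :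
    HasFDerivAt (fun x => g (x + s • θ)) (fderiv ℝ g (x + s • θ)) x := by
  have h1 : HasFDerivAt (fun x : E3 => x + s • θ) (ContinuousLinearMap.id ℝ E3) x :=
    (hasFDerivAt_id x).add_const (s • θ)
  have h2 : HasFDerivAt g (fderiv ℝ g (x + s • θ)) (x + s • θ) :=
    g.differentiableAt.hasFDerivAt
  exact h2.comp x h1

lemma hasFDerivAt_xray_x (g : SchwartzMap E3 ℝ) {θ : E3} (hθ : θ ≠ 0) (x₀ : E3) :
    HasFDerivAt (fun x => ∫ s : ℝ, g (x + s • θ)) (∫ s : ℝ, fderiv ℝ g (x₀ + s • θ)) x₀ := by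
  set u := SchwartzMap.fderivCLM ℝ E3 ℝ g with hu
  obtain ⟨C, hC0, hC⟩ := master_bound u 2 ‖θ‖ (‖x₀‖ + 1) (norm_pos_iff.2 hθ)
    (by positivity)
  apply hasFDerivAt_integral_of_dominated_of_fderiv_le (Metric.ball_mem_nhds x₀ one_pos)
      (bound := fun s => C * (1 + s ^ 2)⁻¹)
      (F' := fun x s => fderiv ℝ g (x + s • θ))
  · exact Filter.Eventually.of_forall fun x => (cont_line g θ x).aestronglyMeasurable
  · exact integrable_line g hθ x₀
  · have : Continuous fun s : ℝ => fderiv ℝ g (x₀ + s • θ) := by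
      simp only [fderiv_line_eq g]; exact cont_line u θ x₀
    exact this.aestronglyMeasurable
  · refine Filter.Eventually.of_forall fun s => fun x hx => ?_
    have hxn : ‖x‖ ≤ ‖x₀‖ + 1 := by
      have := mem_ball_iff_norm.1 hx
      have h := norm_le_norm_add_norm_sub' x x₀
      linarith [this.le]
    have harg : ‖θ‖ * |s| - (‖x₀‖ + 1) ≤ ‖x + s • θ‖ := by
      have := line_arg_norm x θ s; linarith
    have h1 := hC (x + s • θ) s harg
    rw [fderiv_line_eq g]
    have h2 : 1 + s ^ 2 ≤ (1 + |s|) ^ 2 := by nlinarith [abs_nonneg s, sq_abs s]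
    have h3 : (0:ℝ) < 1 + s ^ 2 := by positivity
    have h4 : ‖u (x + s • θ)‖ * (1 + s ^ 2) ≤ C := by
      calc ‖u (x + s • θ)‖ * (1 + s ^ 2) ≤ ‖u (x + s • θ)‖ * (1 + |s|) ^ 2 := by gcongr
        _ ≤ C := by rw [mul_comm]; exact h1
    calc ‖u (x + s • θ)‖ = ‖u (x + s • θ)‖ * (1 + s ^ 2) * (1 + s ^ 2)⁻¹ := by field_simp
      _ ≤ C * (1 + s ^ 2)⁻¹ := by gcongr
  · exact (integrable_inv_one_add_sq).const_mul C
  · exact Filter.Eventually.of_forall fun s => fun x _ => hasFDerivAt_line g θ s x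

lemma hasFDerivAt_line_theta (g : SchwartzMap E3 ℝ) (x : E3) (s : ℝ) (θ : E3) :
    HasFDerivAt (fun θ : E3 => g (x + s • θ)) (s • fderiv ℝ g (x + s • θ)) θ := by
  have h1 : HasFDerivAt (fun θ : E3 => x + s • θ) (s • ContinuousLinearMap.id ℝ E3) θ := by
    exact ((hasFDerivAt_id θ).const_smul s).const_add x
  have h2 : HasFDerivAt g (fderiv ℝ g (x + s • θ)) (x + s • θ) :=
    g.differentiableAt.hasFDerivAt
  have h3 := h2.comp θ h1
  refine h3.congr_fderiv ?_
  ext v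
  simp

lemma hasFDerivAt_xray_theta (g : SchwartzMap E3 ℝ) (x : E3) {θ₀ : E3} (hθ : θ₀ ≠ 0) :
    HasFDerivAt (fun θ : E3 => ∫ s : ℝ, g (x + s • θ))
      (∫ s : ℝ, s • fderiv ℝ g (x + s • θ₀)) θ₀ := by
  set u := SchwartzMap.fderivCLM ℝ E3 ℝ g with hu
  have hpos : (0:ℝ) < ‖θ₀‖ / 2 := by
    have := norm_pos_iff.2 hθ; linarith
  obtain ⟨C, hC0, hC⟩ := master_bound u 3 (‖θ₀‖ / 2) ‖x‖ hpos (norm_nonneg x)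
  apply hasFDerivAt_integral_of_dominated_of_fderiv_le (Metric.ball_mem_nhds θ₀ hpos)
      (bound := fun s => C * (1 + s ^ 2)⁻¹)
      (F' := fun θ s => s • fderiv ℝ g (x + s • θ))
  · refine Filter.Eventually.of_forall fun θ => ?_
    exact (g.continuous.comp (by continuity)).aestronglyMeasurable
  · exact integrable_line g hθ x
  · have : Continuous fun s : ℝ => s • fderiv ℝ g (x + s • θ₀) := by
      simp only [fderiv_line_eq g]
      exact continuous_id.smul (cont_line u θ₀ x)
    exact this.aestronglyMeasurable
  · refine Filter.Eventually.of_forall fun s => fun θ hθ' => ?_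
    have hth : ‖θ₀‖ / 2 ≤ ‖θ‖ := by
      have h := mem_ball_iff_norm.1 hθ'
      have h2 := norm_le_norm_add_norm_sub' θ₀ θ
      have : ‖θ₀ - θ‖ = ‖θ - θ₀‖ := norm_sub_rev θ₀ θ
      linarith [h.le]
    have harg : ‖θ₀‖ / 2 * |s| - ‖x‖ ≤ ‖x + s • θ‖ := by
      have h := line_arg_norm x θ s
      have : ‖θ₀‖ / 2 * |s| ≤ ‖θ‖ * |s| := by
        exact mul_le_mul_of_nonneg_right hth (abs_nonneg s)
      linarith
    have h1 := hC (x + s • θ) s harg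
    rw [fderiv_line_eq g]
    have h2 : |s| * (1 + s ^ 2) ≤ (1 + |s|) ^ 3 := by nlinarith [abs_nonneg s, sq_abs s]
    have h3 : (0:ℝ) < 1 + s ^ 2 := by positivity
    have hns : ‖s • u (x + s • θ)‖ ≤ |s| * ‖u (x + s • θ)‖ := by
      simpa [Real.norm_eq_abs] using norm_smul_le s (u (x + s • θ))
    have h4 : ‖s • u (x + s • θ)‖ * (1 + s ^ 2) ≤ C := by
      calc ‖s • u (x + s • θ)‖ * (1 + s ^ 2)
          ≤ |s| * ‖u (x + s • θ)‖ * (1 + s ^ 2) := by gcongr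
        _ = |s| * (1 + s ^ 2) * ‖u (x + s • θ)‖ := by ring
        _ ≤ (1 + |s|) ^ 3 * ‖u (x + s • θ)‖ := by gcongr
        _ ≤ C := h1
    calc ‖s • u (x + s • θ)‖
        = ‖s • u (x + s • θ)‖ * (1 + s ^ 2) * (1 + s ^ 2)⁻¹ := by field_simp
      _ ≤ C * (1 + s ^ 2)⁻¹ := by gcongr
  · exact (integrable_inv_one_add_sq).const_mul C
  · exact Filter.Eventually.of_forall fun s => fun θ _ => hasFDerivAt_line_theta g x s θ

abbrev Pd (j : Fin 3) (g : SchwartzMap E3 ℝ) : SchwartzMap E3 ℝ :=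
  LineDeriv.lineDerivOp (EuclideanSpace.single j (1:ℝ)) g

lemma pd_eq_Pd (j : Fin 3) (g : SchwartzMap E3 ℝ) (x : E3) :
    pd j (⇑g) x = Pd j g x := by
  rw [pd, SchwartzMap.lineDerivOp_apply_eq_fderiv]

lemma integrable_fderiv_line (g : SchwartzMap E3 ℝ) {θ : E3} (hθ : θ ≠ 0) (x : E3) :
    Integrable fun s : ℝ => fderiv ℝ g (x + s • θ) := by
  simp only [fderiv_line_eq g]
  exact integrable_line (SchwartzMap.fderivCLM ℝ E3 ℝ g) hθ x

lemma pd_xray_x (g : SchwartzMap E3 ℝ) {θ : E3} (hθ : θ ≠ 0) (j : Fin 3) (x₀ : E3) :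
    pd j (fun x => ∫ s : ℝ, g (x + s • θ)) x₀ = ∫ s : ℝ, Pd j g (x₀ + s • θ) := by
  rw [pd, (hasFDerivAt_xray_x g hθ x₀).fderiv,
    ContinuousLinearMap.integral_apply (integrable_fderiv_line g hθ x₀)]
  exact integral_congr_ae (Filter.Eventually.of_forall fun s =>
    (SchwartzMap.lineDerivOp_apply_eq_fderiv (EuclideanSpace.single j 1) g _).symm)

lemma integrable_smul_fderiv_line (g : SchwartzMap E3 ℝ) {θ : E3} (hθ : θ ≠ 0) (x : E3) :
    Integrable fun s : ℝ => s • fderiv ℝ g (x + s • θ) := by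
  simp only [fderiv_line_eq g]
  exact integrable_line_smul (SchwartzMap.fderivCLM ℝ E3 ℝ g) hθ x

lemma pd_xray_theta (g : SchwartzMap E3 ℝ) (x : E3) {θ₀ : E3} (hθ : θ₀ ≠ 0) (j : Fin 3) :
    pd j (fun θ => ∫ s : ℝ, g (x + s • θ)) θ₀ = ∫ s : ℝ, s * Pd j g (x + s • θ₀) := by
  rw [pd, (hasFDerivAt_xray_theta g x hθ).fderiv,
    ContinuousLinearMap.integral_apply (integrable_smul_fderiv_line g hθ x)]
  refine integral_congr_ae (Filter.Eventually.of_forall fun s => ?_)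
  show (s • fderiv ℝ (⇑g) (x + s • θ₀)) (EuclideanSpace.single j 1) = _
  simp only [ContinuousLinearMap.smul_apply, Pd, SchwartzMap.lineDerivOp_apply_eq_fderiv, smul_eq_mul]

lemma pd_pd_comm (g : SchwartzMap E3 ℝ) (i j : Fin 3) (x : E3) :
    pd i (pd j (⇑g)) x = pd j (pd i (⇑g)) x := by
  have hf : ∀ y, HasFDerivAt g (fderiv ℝ g y) y := fun y => g.differentiableAt.hasFDerivAt
  have hdiff : DifferentiableAt ℝ (fderiv ℝ (⇑g)) x := by
    rw [show fderiv ℝ (⇑g) = ⇑(SchwartzMap.fderivCLM ℝ E3 ℝ g) from funext (fderiv_line_eq g)]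
    exact (SchwartzMap.fderivCLM ℝ E3 ℝ g).differentiableAt
  have h2 : HasFDerivAt (fderiv ℝ g) (fderiv ℝ (fderiv ℝ g) x) x := hdiff.hasFDerivAt
  have sym := second_derivative_symmetric hf h2 (EuclideanSpace.single i 1)
    (EuclideanSpace.single j 1)
  have key : ∀ (a b : Fin 3),
      pd a (pd b (⇑g)) x = fderiv ℝ (fderiv ℝ g) x (EuclideanSpace.single a 1)
        (EuclideanSpace.single b 1) := by
    intro a b
    have hD := ((ContinuousLinearMap.apply ℝ ℝ (EuclideanSpace.single b 1)).hasFDerivAt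
      (x := fderiv ℝ (⇑g) x)).comp x h2
    have heq : (⇑(ContinuousLinearMap.apply ℝ ℝ (EuclideanSpace.single b 1)) ∘ fderiv ℝ (⇑g))
        = fun y => fderiv ℝ (⇑g) y (EuclideanSpace.single b 1) := rfl
    rw [heq] at hD
    rw [pd, show pd b (⇑g) = fun y => fderiv ℝ (⇑g) y (EuclideanSpace.single b 1) from rfl,
      hD.fderiv]
    rfl
  rw [key i j, key j i, sym]


lemma Pd_comm (a b : Fin 3) (h : SchwartzMap E3 ℝ) (y : E3) :
    Pd a (Pd b h) y = Pd b (Pd a h) y := by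
  have e1 : ∀ (c d : Fin 3), Pd c (Pd d h) y = pd c (pd d (⇑h)) y := by
    intro c d
    rw [show pd d (⇑h) = ⇑(Pd d h) from funext fun z => pd_eq_Pd d h z]
    exact (pd_eq_Pd c (Pd d h) y).symm
  rw [e1, e1, pd_pd_comm]

lemma E3_decomp (y : E3) : y = ∑ j : Fin 3, y j • (EuclideanSpace.single j (1:ℝ)) := by
  ext k
  have hsum := map_sum (EuclideanSpace.proj (𝕜 := ℝ) k)
    (fun j => y j • EuclideanSpace.single j (1:ℝ)) (Finset.univ)
  have hterm : ∀ j : Fin 3, EuclideanSpace.proj (𝕜 := ℝ) k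
      (y j • EuclideanSpace.single j (1:ℝ)) = if j = k then y j else 0 := by
    intro j
    show (y j • EuclideanSpace.single j (1:ℝ)) k = _
    rw [PiLp.smul_apply, smul_eq_mul]
    by_cases h : j = k
    · simp [h]
    · simp only [h, if_false, EuclideanSpace.single_apply]
      rw [if_neg (fun hk => h hk.symm)]
      simp
  calc y k = ∑ j : Fin 3, EuclideanSpace.proj (𝕜 := ℝ) k
        (y j • EuclideanSpace.single j (1:ℝ)) := by
        simp [hterm]
    _ = EuclideanSpace.proj (𝕜 := ℝ) k
        (∑ j : Fin 3, y j • EuclideanSpace.single j (1:ℝ)) := hsum.symm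
    _ = (∑ j : Fin 3, y j • EuclideanSpace.single j (1:ℝ)) k := rfl

lemma xray_apply (F : E3 → E3) (g : Fin 3 → SchwartzMap E3 ℝ)
    (hg : ∀ i x, F x i = g i x) {θ : E3} (hθ : θ ≠ 0) (x : E3) (i : Fin 3) :
    xray F θ x i = ∫ s : ℝ, g i (x + s • θ) := by
  have hd : ∀ y : E3, F y = ∑ j : Fin 3, g j y • EuclideanSpace.single j (1:ℝ) := by
    intro y
    have := E3_decomp (F y)
    simpa [hg] using this
  have hInt : Integrable (fun s : ℝ => F (x + s • θ)) := by
    rw [show (fun s : ℝ => F (x + s • θ))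
        = fun s => ∑ j : Fin 3, g j (x + s • θ) • EuclideanSpace.single j (1:ℝ) from
      funext fun s => hd _]
    exact integrable_finset_sum _ fun j _ => (integrable_line (g j) hθ x).smul_const _
  have hcomm := (EuclideanSpace.proj (𝕜 := ℝ) i).integral_comp_comm hInt
  calc xray F θ x i = EuclideanSpace.proj (𝕜 := ℝ) i (∫ s : ℝ, F (x + s • θ)) := rfl
    _ = ∫ s : ℝ, EuclideanSpace.proj (𝕜 := ℝ) i (F (x + s • θ)) := hcomm.symm
    _ = ∫ s : ℝ, g i (x + s • θ) := by
        refine integral_congr_ae (Filter.Eventually.of_forall fun s => ?_)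
        show F (x + s • θ) i = _
        exact hg i _



lemma Pd_sub_apply (j : Fin 3) (A B : SchwartzMap E3 ℝ) (y : E3) :
    Pd j (A - B) y = Pd j A y - Pd j B y := by
  rw [← pd_eq_Pd, ← pd_eq_Pd, ← pd_eq_Pd,
    show ⇑(A - B) = fun z => A z - B z from funext fun z => by simp,
    pd, pd, pd, fderiv_fun_sub A.differentiableAt B.differentiableAt]
  simp

lemma Pd_of_eq_mul (c : ℝ) (h k : SchwartzMap E3 ℝ) (j : Fin 3)
    (hh : ∀ z, h z = c * k z) (y : E3) : Pd j h y = c * Pd j k y := by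
  rw [← pd_eq_Pd, ← pd_eq_Pd,
    show ⇑h = fun z => c * k z from funext hh, pd, pd,
    fderiv_const_mul k.differentiableAt c]
  simp

lemma curl_component (ν : ℝ) (g : Fin 3 → SchwartzMap E3 ℝ) {θ : E3} (hθ : θ ≠ 0) (x : E3)
    (a b c : Fin 3) (hpt : ∀ y, Pd b (g c) y - Pd c (g b) y = ν * g a y) :
    pd b (fun y => ∫ s : ℝ, g c (y + s • θ)) x - pd c (fun y => ∫ s : ℝ, g b (y + s • θ)) x
      = ν * ∫ s : ℝ, g a (x + s • θ) := by
  rw [pd_xray_x (g c) hθ b x, pd_xray_x (g b) hθ c x,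
    ← integral_sub (integrable_line (Pd b (g c)) hθ x) (integrable_line (Pd c (g b)) hθ x),
    ← integral_const_mul]
  exact integral_congr_ae (Filter.Eventually.of_forall fun s => hpt _)

/-- the X-ray transform of a Trkalian field is Trkalian in `x`,
divergence-free in `x`, and (extended to all `θ ≠ 0`) divergence-free in `θ`. -/
theorem xray_of_trkalian_is_trkalian (ν : ℝ) (hν : ν ≠ 0) (F : E3 → E3)
    (hF : IsSchwartzField F) (hT : ∀ x, curl3 F x = ν • F x)
    (θ : E3) (hθ : ‖θ‖ = 1) :
    (∀ x : E3, curl3 (fun y => xray F θ y) x = ν • xray F θ x) ∧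
    (∀ x : E3, div3 (fun y => xray F θ y) x = 0) ∧
    (∀ θ' : E3, θ' ≠ 0 → ∀ x : E3, div3 (fun t => xray F t x) θ' = 0) := by
  classical
  choose g hg using hF
  have hθ0 : θ ≠ 0 := by
    intro h; rw [h] at hθ; simp at hθ
  have hcomp : ∀ i : Fin 3, (fun z => F z i) = ⇑(g i) := fun i => funext fun z => hg i z
  -- pointwise curl identities
  have hcurlpt : ∀ (a b c : Fin 3),
      (∀ y : E3, curl3 F y a = pd b (fun z => F z c) y - pd c (fun z => F z b) y) →
      ∀ y : E3, Pd b (g c) y - Pd c (g b) y = ν * g a y := by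
    intro a b c hcc y
    have h1 : curl3 F y a = (ν • F y) a := by rw [hT y]
    have h2 : (ν • F y) a = ν * F y a := rfl
    rw [hcc y, h2, hg a y] at h1
    rw [hcomp b, hcomp c] at h1
    rw [← pd_eq_Pd, ← pd_eq_Pd]
    exact h1
  have hc0 : ∀ y : E3, Pd 1 (g 2) y - Pd 2 (g 1) y = ν * g 0 y :=
    hcurlpt 0 1 2 (fun y => rfl)
  have hc1 : ∀ y : E3, Pd 2 (g 0) y - Pd 0 (g 2) y = ν * g 1 y :=
    hcurlpt 1 2 0 (fun y => rfl)
  have hc2 : ∀ y : E3, Pd 0 (g 1) y - Pd 1 (g 0) y = ν * g 2 y :=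
    hcurlpt 2 0 1 (fun y => rfl)
  -- divergence-free
  have hdiv0 : ∀ y : E3, (∑ i : Fin 3, Pd i (g i) y) = 0 := by
    intro y
    have e0 : Pd 0 (Pd 1 (g 2) - Pd 2 (g 1)) y = ν * Pd 0 (g 0) y :=
      Pd_of_eq_mul ν _ _ _ (fun z => by simpa using hc0 z) y
    have e1 : Pd 1 (Pd 2 (g 0) - Pd 0 (g 2)) y = ν * Pd 1 (g 1) y :=
      Pd_of_eq_mul ν _ _ _ (fun z => by simpa using hc1 z) y
    have e2 : Pd 2 (Pd 0 (g 1) - Pd 1 (g 0)) y = ν * Pd 2 (g 2) y :=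
      Pd_of_eq_mul ν _ _ _ (fun z => by simpa using hc2 z) y
    have s0 : Pd 0 (Pd 1 (g 2) - Pd 2 (g 1)) y
        = Pd 0 (Pd 1 (g 2)) y - Pd 0 (Pd 2 (g 1)) y := Pd_sub_apply _ _ _ y
    have s1 : Pd 1 (Pd 2 (g 0) - Pd 0 (g 2)) y
        = Pd 1 (Pd 2 (g 0)) y - Pd 1 (Pd 0 (g 2)) y := Pd_sub_apply _ _ _ y
    have s2 : Pd 2 (Pd 0 (g 1) - Pd 1 (g 0)) y
        = Pd 2 (Pd 0 (g 1)) y - Pd 2 (Pd 1 (g 0)) y := Pd_sub_apply _ _ _ y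
    have c01 := Pd_comm 0 1 (g 2) y
    have c02 := Pd_comm 0 2 (g 1) y
    have c12 := Pd_comm 1 2 (g 0) y
    have hsum : ν * (∑ i : Fin 3, Pd i (g i) y) = 0 := by
      rw [Fin.sum_univ_three]
      rw [s0] at e0; rw [s1] at e1; rw [s2] at e2
      linarith
    exact (mul_eq_zero.1 hsum).resolve_left hν
  have hxc : ∀ (j : Fin 3), (fun y => xray F θ y j) = fun y => ∫ s : ℝ, g j (y + s • θ) :=
    fun j => funext fun y => xray_apply F g hg hθ0 y j
  refine ⟨?_, ?_, ?_⟩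
  · -- curl in x
    intro x
    ext i
    fin_cases i
    · show pd 1 (fun y => xray F θ y 2) x - pd 2 (fun y => xray F θ y 1) x
        = ν * xray F θ x 0
      rw [hxc 2, hxc 1, curl_component ν g hθ0 x 0 1 2 hc0, xray_apply F g hg hθ0 x 0]
    · show pd 2 (fun y => xray F θ y 0) x - pd 0 (fun y => xray F θ y 2) x
        = ν * xray F θ x 1
      rw [hxc 0, hxc 2, curl_component ν g hθ0 x 1 2 0 hc1, xray_apply F g hg hθ0 x 1]
    · show pd 0 (fun y => xray F θ y 1) x - pd 1 (fun y => xray F θ y 0) x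
        = ν * xray F θ x 2
      rw [hxc 1, hxc 0, curl_component ν g hθ0 x 2 0 1 hc2, xray_apply F g hg hθ0 x 2]
  · -- divergence in x
    intro x
    rw [div3]
    have : ∀ i : Fin 3, pd i (fun y => xray F θ y i) x
        = ∫ s : ℝ, Pd i (g i) (x + s • θ) := by
      intro i
      rw [hxc i, pd_xray_x (g i) hθ0 i x]
    simp only [this]
    rw [← integral_finset_sum _ (fun i _ => integrable_line (Pd i (g i)) hθ0 x)]
    rw [show (fun s : ℝ => ∑ i : Fin 3, Pd i (g i) (x + s • θ)) = fun _ => (0:ℝ) from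
      funext fun s => hdiv0 _]
    simp
  · -- divergence in θ
    intro θ' hθ' x
    rw [div3]
    have hev : ∀ j : Fin 3, (fun t => xray F t x j)
        =ᶠ[nhds θ'] (fun t => ∫ s : ℝ, g j (x + s • t)) := by
      intro j
      have hmem : θ' ∈ ({(0:E3)}ᶜ : Set E3) := by simpa using hθ'
      filter_upwards [isOpen_compl_singleton.mem_nhds hmem] with t ht
      exact xray_apply F g hg (by simpa using ht) x j
    have hpd : ∀ j : Fin 3, pd j (fun t => xray F t x j) θ'
        = ∫ s : ℝ, s * Pd j (g j) (x + s • θ') := by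
      intro j
      rw [pd, (hev j).fderiv_eq]
      exact pd_xray_theta (g j) x hθ' j
    simp only [hpd]
    have hint : ∀ j : Fin 3, Integrable fun s : ℝ => s * Pd j (g j) (x + s • θ') := by
      intro j
      simpa [smul_eq_mul] using integrable_line_smul (Pd j (g j)) hθ' x
    rw [← integral_finset_sum _ (fun j _ => hint j)]
    have : (fun s : ℝ => ∑ j : Fin 3, s * Pd j (g j) (x + s • θ')) = fun _ => (0:ℝ) := by
      funext s
      rw [← Finset.mul_sum, hdiv0, mul_zero]
    rw [this]
    simp
end
end

section
/- Equivalent form of John's equation for Trkalian fields: let ν ∈ ℝ, ν ≠ 0, and let G : ℝ³ × ℝ³ → ℝ³, written G(θ, x), be a smooth (C²) vector-valued function satisfying curl_x G(θ, x) = ν G(θ, x) and div_θ G(θ, x) = 0 for all (θ, x). Then the following are equivalent: (a) John's equation holds, i.e. ∂²G_k/∂x_i ∂θ_j = ∂²G_k/∂x_j ∂θ_i for all components k and all indices i, j; (b) ∂/∂x_m (curl_θ G)_k = ν ∂/∂θ_m G_k for all indices m, k. -/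
open MeasureTheory

noncomputable section

section JohnsHelpers
open ContinuousLinearMap

abbrev e3 (j : Fin 3) : E3 := EuclideanSpace.single j (1:ℝ)

variable {F : E3 × E3 → E3}

lemma hasF_fst (hF : ContDiff ℝ 2 F) (θ x : E3) : HasFDerivAt (fun θ' => F (θ', x))
    ((fderiv ℝ F (θ, x)).comp (inl ℝ E3 E3)) θ :=
  ((hF.differentiable two_ne_zero) (θ, x)).hasFDerivAt.comp θ (hasFDerivAt_prodMk_left θ x)

lemma hasF_snd (hF : ContDiff ℝ 2 F) (θ x : E3) : HasFDerivAt (fun x' => F (θ, x'))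
    ((fderiv ℝ F (θ, x)).comp (inr ℝ E3 E3)) x :=
  ((hF.differentiable two_ne_zero) (θ, x)).hasFDerivAt.comp x (hasFDerivAt_prodMk_right θ x)

lemma diffPhi (hF : ContDiff ℝ 2 F) : Differentiable ℝ (fderiv ℝ F) :=
  (hF.fderiv_right (m := 1) (by norm_num)).differentiable (by norm_num)

lemma hasPhi_snd (hF : ContDiff ℝ 2 F) (θ x : E3) (w : E3 × E3) :
    HasFDerivAt (fun x' => fderiv ℝ F (θ, x') w)
      ((((fderiv ℝ (fderiv ℝ F) (θ, x)).comp (inr ℝ E3 E3)).flip) w) x := by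
  have h1 : HasFDerivAt (fun x' => fderiv ℝ F (θ, x'))
      ((fderiv ℝ (fderiv ℝ F) (θ, x)).comp (inr ℝ E3 E3)) x :=
    ((diffPhi hF) (θ, x)).hasFDerivAt.comp x (hasFDerivAt_prodMk_right θ x)
  simpa using h1.clm_apply (hasFDerivAt_const w x)

lemma hasPhi_fst (hF : ContDiff ℝ 2 F) (θ x : E3) (w : E3 × E3) :
    HasFDerivAt (fun θ' => fderiv ℝ F (θ', x) w)
      ((((fderiv ℝ (fderiv ℝ F) (θ, x)).comp (inl ℝ E3 E3)).flip) w) θ := by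
  have h1 : HasFDerivAt (fun θ' => fderiv ℝ F (θ', x))
      ((fderiv ℝ (fderiv ℝ F) (θ, x)).comp (inl ℝ E3 E3)) θ :=
    ((diffPhi hF) (θ, x)).hasFDerivAt.comp θ (hasFDerivAt_prodMk_left θ x)
  simpa using h1.clm_apply (hasFDerivAt_const w θ)

lemma schwarz (hF : ContDiff ℝ 2 F) (p : E3 × E3) (u v : E3 × E3) :
    fderiv ℝ (fderiv ℝ F) p u v = fderiv ℝ (fderiv ℝ F) p v u :=
  second_derivative_symmetric (fun y => ((hF.differentiable two_ne_zero) y).hasFDerivAt)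
    ((diffPhi hF p).hasFDerivAt) u v

-- now G level
def Fj (G : E3 → E3 → E3) : E3 × E3 → E3 := fun p => G p.1 p.2
def Bmix (G : E3 → E3 → E3) (θ x : E3) (i j : Fin 3) : E3 :=
  fderiv ℝ (fderiv ℝ (Fj G)) (θ, x) (0, e3 i) (e3 j, 0)
def gth (G : E3 → E3 → E3) (θ x : E3) (m : Fin 3) : E3 := fderiv ℝ (Fj G) (θ, x) (e3 m, 0)

variable {G : E3 → E3 → E3}

-- the inner θ-derivative
lemma inner_theta (hsm : ContDiff ℝ 2 (Fj G)) (θ x' : E3) (j : Fin 3) :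
    fderiv ℝ (fun θ' => G θ' x') θ (e3 j) = fderiv ℝ (Fj G) (θ, x') (e3 j, 0) := by
  have h : HasFDerivAt (fun θ' => G θ' x')
      ((fderiv ℝ (Fj G) (θ, x')).comp (inl ℝ E3 E3)) θ := hasF_fst hsm θ x'
  rw [h.fderiv]; simp

-- translation of the (a) expression
lemma a_expr (hsm : ContDiff ℝ 2 (Fj G)) (θ x : E3) (i j : Fin 3) :
    fderiv ℝ (fun x' => fderiv ℝ (fun θ' => G θ' x') θ (EuclideanSpace.single j 1)) x
      (EuclideanSpace.single i 1) = Bmix G θ x i j := by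
  have hrw : (fun x' => fderiv ℝ (fun θ' => G θ' x') θ (EuclideanSpace.single j 1))
      = fun x' => fderiv ℝ (Fj G) (θ, x') (e3 j, 0) := by
    funext x'; exact inner_theta hsm θ x' j
  rw [hrw, (hasPhi_snd hsm θ x (e3 j, 0)).fderiv]
  simp [Bmix]

-- pd of components
lemma pd_theta (hsm : ContDiff ℝ 2 (Fj G)) (θ x' : E3) (a b : Fin 3) :
    pd a (fun θ' => G θ' x' b) θ = fderiv ℝ (Fj G) (θ, x') (e3 a, 0) b := by
  have h0 := (EuclideanSpace.proj b).hasFDerivAt.comp θ (hasF_fst hsm θ x')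
  have h : HasFDerivAt (fun θ' => G θ' x' b)
      ((EuclideanSpace.proj b).comp ((fderiv ℝ (Fj G) (θ, x')).comp (inl ℝ E3 E3))) θ := h0
  rw [pd, h.fderiv]; simp

lemma pd_x (hsm : ContDiff ℝ 2 (Fj G)) (θ x : E3) (a b : Fin 3) :
    pd a (fun x' => G θ x' b) x = fderiv ℝ (Fj G) (θ, x) (0, e3 a) b := by
  have h0 := (EuclideanSpace.proj b).hasFDerivAt.comp x (hasF_snd hsm θ x)
  have h : HasFDerivAt (fun x' => G θ x' b)
      ((EuclideanSpace.proj b).comp ((fderiv ℝ (Fj G) (θ, x)).comp (inr ℝ E3 E3))) x := h0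
  rw [pd, h.fderiv]; simp

-- pd in x of a difference of θ-slot derivatives (for (b) LHS)
lemma pd_curl (hsm : ContDiff ℝ 2 (Fj G)) (θ x : E3) (m a b c d : Fin 3) :
    pd m (fun x' => fderiv ℝ (Fj G) (θ, x') (e3 a, 0) b
                  - fderiv ℝ (Fj G) (θ, x') (e3 c, 0) d) x
      = Bmix G θ x m a b - Bmix G θ x m c d := by
  have h1 := (EuclideanSpace.proj b).hasFDerivAt.comp x (hasPhi_snd hsm θ x (e3 a, 0))
  have h2 := (EuclideanSpace.proj d).hasFDerivAt.comp x (hasPhi_snd hsm θ x (e3 c, 0))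
  have h : HasFDerivAt (fun x' => fderiv ℝ (Fj G) (θ, x') (e3 a, 0) b
                  - fderiv ℝ (Fj G) (θ, x') (e3 c, 0) d) _ x := h1.sub h2
  rw [pd, h.fderiv]; simp [Bmix]

-- the key relation from differentiating hT in θ
lemma rel_gen (hsm : ContDiff ℝ 2 (Fj G)) (ν : ℝ) (x : E3) (a b c d k : Fin 3)
    (h0 : ∀ θ' : E3, fderiv ℝ (Fj G) (θ', x) (0, e3 a) b
        - fderiv ℝ (Fj G) (θ', x) (0, e3 c) d = ν * G θ' x k) (θ : E3) (m : Fin 3) :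
    Bmix G θ x a m b - Bmix G θ x c m d = ν * gth G θ x m k := by
  have hA := (EuclideanSpace.proj b).hasFDerivAt.comp θ (hasPhi_fst hsm θ x (0, e3 a))
  have hC := (EuclideanSpace.proj d).hasFDerivAt.comp θ (hasPhi_fst hsm θ x (0, e3 c))
  have hG0 := (EuclideanSpace.proj k).hasFDerivAt.comp θ (hasF_fst hsm θ x)
  have hG : HasFDerivAt (fun θ' => G θ' x k)
      ((EuclideanSpace.proj k).comp ((fderiv ℝ (Fj G) (θ, x)).comp (inl ℝ E3 E3))) θ := hG0
  have hcomb : HasFDerivAt (fun θ' => fderiv ℝ (Fj G) (θ', x) (0, e3 a) b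
      - fderiv ℝ (Fj G) (θ', x) (0, e3 c) d - ν * G θ' x k) _ θ :=
    (hA.sub hC).sub (hG.const_mul ν)
  have hfun : (fun θ' => fderiv ℝ (Fj G) (θ', x) (0, e3 a) b
      - fderiv ℝ (Fj G) (θ', x) (0, e3 c) d - ν * G θ' x k) = fun _ => (0:ℝ) := by
    funext θ'; rw [h0 θ']; ring
  rw [hfun] at hcomb
  have hz := hcomb.unique (hasFDerivAt_const 0 θ)
  have := congrFun (congrArg DFunLike.coe hz) (e3 m)
  simp only [ContinuousLinearMap.sub_apply, ContinuousLinearMap.coe_comp', Function.comp_apply,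
    ContinuousLinearMap.smul_apply, ContinuousLinearMap.zero_apply,
    ContinuousLinearMap.flip_apply, ContinuousLinearMap.inl_apply,
    PiLp.proj_apply, smul_eq_mul, ContinuousLinearMap.coe_smul'] at this
  have hs1 : fderiv ℝ (fderiv ℝ (Fj G)) (θ, x) (e3 m, 0) (0, e3 a) = Bmix G θ x a m :=
    schwarz hsm (θ, x) _ _
  have hs2 : fderiv ℝ (fderiv ℝ (Fj G)) (θ, x) (e3 m, 0) (0, e3 c) = Bmix G θ x c m :=
    schwarz hsm (θ, x) _ _
  rw [hs1, hs2] at this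
  unfold gth
  linarith [this]

-- LHS of (b), translated, for each component
lemma bL0 (hsm : ContDiff ℝ 2 (Fj G)) (θ x : E3) (m : Fin 3) :
    pd m (fun x' => curl3 (fun θ' => G θ' x') θ 0) x
      = Bmix G θ x m 1 2 - Bmix G θ x m 2 1 := by
  have hrw : (fun x' => curl3 (fun θ' => G θ' x') θ 0)
      = fun x' => fderiv ℝ (Fj G) (θ, x') (e3 1, 0) 2 - fderiv ℝ (Fj G) (θ, x') (e3 2, 0) 1 := by
    funext x'
    show pd 1 (fun θ' => G θ' x' 2) θ - pd 2 (fun θ' => G θ' x' 1) θ = _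
    rw [pd_theta hsm, pd_theta hsm]
  rw [hrw, pd_curl hsm]

lemma bL1 (hsm : ContDiff ℝ 2 (Fj G)) (θ x : E3) (m : Fin 3) :
    pd m (fun x' => curl3 (fun θ' => G θ' x') θ 1) x
      = Bmix G θ x m 2 0 - Bmix G θ x m 0 2 := by
  have hrw : (fun x' => curl3 (fun θ' => G θ' x') θ 1)
      = fun x' => fderiv ℝ (Fj G) (θ, x') (e3 2, 0) 0 - fderiv ℝ (Fj G) (θ, x') (e3 0, 0) 2 := by
    funext x'
    show pd 2 (fun θ' => G θ' x' 0) θ - pd 0 (fun θ' => G θ' x' 2) θ = _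
    rw [pd_theta hsm, pd_theta hsm]
  rw [hrw, pd_curl hsm]

lemma bL2 (hsm : ContDiff ℝ 2 (Fj G)) (θ x : E3) (m : Fin 3) :
    pd m (fun x' => curl3 (fun θ' => G θ' x') θ 2) x
      = Bmix G θ x m 0 1 - Bmix G θ x m 1 0 := by
  have hrw : (fun x' => curl3 (fun θ' => G θ' x') θ 2)
      = fun x' => fderiv ℝ (Fj G) (θ, x') (e3 0, 0) 1 - fderiv ℝ (Fj G) (θ, x') (e3 1, 0) 0 := by
    funext x'
    show pd 0 (fun θ' => G θ' x' 1) θ - pd 1 (fun θ' => G θ' x' 0) θ = _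
    rw [pd_theta hsm, pd_theta hsm]
  rw [hrw, pd_curl hsm]

lemma bR (hsm : ContDiff ℝ 2 (Fj G)) (θ x : E3) (m k : Fin 3) :
    pd m (fun θ' => G θ' x k) θ = gth G θ x m k := by
  rw [pd_theta hsm]; rfl

/-- for a `C²` function `G(θ,x)` with `curl_x G = ν G` and
`div_θ G = 0`, John's equation is equivalent to
`∂/∂x_m (curl_θ G)_k = ν ∂/∂θ_m G_k` for all `m, k`. -/
theorem johns_equation_equivalent_form (ν : ℝ) (hν : ν ≠ 0)
    (G : E3 → E3 → E3) (hsm : ContDiff ℝ 2 (fun p : E3 × E3 => G p.1 p.2))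
    (hT : ∀ θ x, curl3 (fun x' => G θ x') x = ν • G θ x)
    (hdiv : ∀ θ x, div3 (fun θ' => G θ' x) θ = 0) :
    (∀ (i j : Fin 3) (θ x : E3),
        fderiv ℝ (fun x' => fderiv ℝ (fun θ' => G θ' x') θ (EuclideanSpace.single j 1)) x
            (EuclideanSpace.single i 1)
          = fderiv ℝ (fun x' => fderiv ℝ (fun θ' => G θ' x') θ (EuclideanSpace.single i 1)) x
            (EuclideanSpace.single j 1))
      ↔
    (∀ (m k : Fin 3) (θ x : E3),
        pd m (fun x' => curl3 (fun θ' => G θ' x') θ k) x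
          = ν * pd m (fun θ' => G θ' x k) θ) := by
  have hsm' : ContDiff ℝ 2 (Fj G) := hsm
  have h0 : ∀ x θ' : E3, fderiv ℝ (Fj G) (θ', x) (0, e3 1) 2
      - fderiv ℝ (Fj G) (θ', x) (0, e3 2) 1 = ν * G θ' x 0 := by
    intro x θ'
    have h : (curl3 (fun x' => G θ' x') x) 0 = (ν • G θ' x) 0 := by rw [hT θ' x]
    have hL : (curl3 (fun x' => G θ' x') x) 0
        = pd 1 (fun y => G θ' y 2) x - pd 2 (fun y => G θ' y 1) x := rfl
    rw [hL, pd_x hsm', pd_x hsm'] at h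
    exact h
  have h1 : ∀ x θ' : E3, fderiv ℝ (Fj G) (θ', x) (0, e3 2) 0
      - fderiv ℝ (Fj G) (θ', x) (0, e3 0) 2 = ν * G θ' x 1 := by
    intro x θ'
    have h : (curl3 (fun x' => G θ' x') x) 1 = (ν • G θ' x) 1 := by rw [hT θ' x]
    have hL : (curl3 (fun x' => G θ' x') x) 1
        = pd 2 (fun y => G θ' y 0) x - pd 0 (fun y => G θ' y 2) x := rfl
    rw [hL, pd_x hsm', pd_x hsm'] at h
    exact h
  have h2 : ∀ x θ' : E3, fderiv ℝ (Fj G) (θ', x) (0, e3 0) 1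
      - fderiv ℝ (Fj G) (θ', x) (0, e3 1) 0 = ν * G θ' x 2 := by
    intro x θ'
    have h : (curl3 (fun x' => G θ' x') x) 2 = (ν • G θ' x) 2 := by rw [hT θ' x]
    have hL : (curl3 (fun x' => G θ' x') x) 2
        = pd 0 (fun y => G θ' y 1) x - pd 1 (fun y => G θ' y 0) x := rfl
    rw [hL, pd_x hsm', pd_x hsm'] at h
    exact h
  have R0 : ∀ (θ x : E3) (m : Fin 3),
      Bmix G θ x 1 m 2 - Bmix G θ x 2 m 1 = ν * gth G θ x m 0 :=
    fun θ x m => rel_gen hsm' ν x 1 2 2 1 0 (h0 x) θ m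
  have R1 : ∀ (θ x : E3) (m : Fin 3),
      Bmix G θ x 2 m 0 - Bmix G θ x 0 m 2 = ν * gth G θ x m 1 :=
    fun θ x m => rel_gen hsm' ν x 2 0 0 2 1 (h1 x) θ m
  have R2 : ∀ (θ x : E3) (m : Fin 3),
      Bmix G θ x 0 m 1 - Bmix G θ x 1 m 0 = ν * gth G θ x m 2 :=
    fun θ x m => rel_gen hsm' ν x 0 1 1 0 2 (h2 x) θ m
  constructor
  · intro ha m k θ x
    have hB : ∀ i j : Fin 3, Bmix G θ x i j = Bmix G θ x j i := by
      intro i j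
      rw [← a_expr hsm' θ x i j, ← a_expr hsm' θ x j i]
      exact ha i j θ x
    rw [bR hsm']
    fin_cases k <;>
      simp only [Fin.mk_zero, Fin.mk_one, Fin.reduceFinMk, Fin.isValue]
    · rw [bL0 hsm']
      have e1 : Bmix G θ x m 1 2 = Bmix G θ x 1 m 2 := by rw [hB m 1]
      have e2 : Bmix G θ x m 2 1 = Bmix G θ x 2 m 1 := by rw [hB m 2]
      have := R0 θ x m
      linarith
    · rw [bL1 hsm']
      have e1 : Bmix G θ x m 2 0 = Bmix G θ x 2 m 0 := by rw [hB m 2]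
      have e2 : Bmix G θ x m 0 2 = Bmix G θ x 0 m 2 := by rw [hB m 0]
      have := R1 θ x m
      linarith
    · rw [bL2 hsm']
      have e1 : Bmix G θ x m 0 1 = Bmix G θ x 0 m 1 := by rw [hB m 0]
      have e2 : Bmix G θ x m 1 0 = Bmix G θ x 1 m 0 := by rw [hB m 1]
      have := R2 θ x m
      linarith
  · intro hb i j θ x
    rw [a_expr hsm' θ x i j, a_expr hsm' θ x j i]
    have S0 : ∀ m : Fin 3, Bmix G θ x m 1 2 - Bmix G θ x m 2 1
        = Bmix G θ x 1 m 2 - Bmix G θ x 2 m 1 := by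
      intro m
      have h := hb m 0 θ x
      rw [bL0 hsm', bR hsm'] at h
      rw [h]; exact (R0 θ x m).symm
    have S1' : ∀ m : Fin 3, Bmix G θ x m 2 0 - Bmix G θ x m 0 2
        = Bmix G θ x 2 m 0 - Bmix G θ x 0 m 2 := by
      intro m
      have h := hb m 1 θ x
      rw [bL1 hsm', bR hsm'] at h
      rw [h]; exact (R1 θ x m).symm
    have S2 : ∀ m : Fin 3, Bmix G θ x m 0 1 - Bmix G θ x m 1 0
        = Bmix G θ x 0 m 1 - Bmix G θ x 1 m 0 := by
      intro m
      have h := hb m 2 θ x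
      rw [bL2 hsm', bR hsm'] at h
      rw [h]; exact (R2 θ x m).symm
    ext k
    have s00 := S0 0; have s01 := S0 1; have s02 := S0 2
    have s10 := S1' 0; have s11 := S1' 1; have s12 := S1' 2
    have s20 := S2 0; have s21 := S2 1; have s22 := S2 2
    fin_cases i <;> fin_cases j <;> fin_cases k <;>
      simp only [Fin.mk_zero, Fin.mk_one, Fin.reduceFinMk, Fin.isValue] at * <;> linarith

end JohnsHelpers
end
end

section
/- Algebraic reduction of the twistor form of the Trkalian equation: let k ∈ ℂ, k ≠ 0, and let L, M, N : ℂ × ℂ → ℂ, written as functions of (η, ω), be holomorphic and satisfy for all (η, ω) the system: i(1+ω²) ∂N/∂η − 2ω ∂M/∂η = k(L + iM + ωN); 2ω ∂L/∂η − (1−ω²) ∂N/∂η = −ik(L + iM + ωN); and (1−ω²) ∂M/∂η − i(1+ω²) ∂L/∂η = −k[ω(L − iM) − N]. Then the algebraic identities (1−ω²)L + i(1+ω²)M + 2ωN = 0 and −i(1+ω²)L + (1−ω²)M = 0 hold identically; consequently, for all (η, ω) with ω² ≠ 1 and ω ≠ 0, setting u(η, ω) = L(η, ω)/(1−ω²),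 one has L = (1−ω²)u, M = i(1+ω²)u and N = 2ω u. -/
noncomputable section

/-- algebraic reduction of the twistor form of the Trkalian
equation.  Holomorphic `L, M, N` satisfying the twistor system obey the
algebraic identities `(1−ω²)L + i(1+ω²)M + 2ωN = 0` and
`−i(1+ω²)L + (1−ω²)M = 0`; hence, where `ω² ≠ 1` and `ω ≠ 0`, with
`u = L/(1−ω²)` one has `L = (1−ω²)u`, `M = i(1+ω²)u`, `N = 2ωu`. -/
theorem twistor_algebraic_reduction (k : ℂ) (hk : k ≠ 0) (L M N : ℂ → ℂ → ℂ)
    (hL : ∀ z : ℂ × ℂ, AnalyticAt ℂ (fun w : ℂ × ℂ => L w.1 w.2) z)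
    (hM : ∀ z : ℂ × ℂ, AnalyticAt ℂ (fun w : ℂ × ℂ => M w.1 w.2) z)
    (hN : ∀ z : ℂ × ℂ, AnalyticAt ℂ (fun w : ℂ × ℂ => N w.1 w.2) z)
    (h1 : ∀ η w : ℂ,
      Complex.I * (1 + w ^ 2) * deriv (fun η' => N η' w) η
          - 2 * w * deriv (fun η' => M η' w) η
        = k * (L η w + Complex.I * M η w + w * N η w))
    (h2 : ∀ η w : ℂ,
      2 * w * deriv (fun η' => L η' w) η - (1 - w ^ 2) * deriv (fun η' => N η' w) η
        = -(Complex.I * k) * (L η w + Complex.I * M η w + w * N η w))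
    (h3 : ∀ η w : ℂ,
      (1 - w ^ 2) * deriv (fun η' => M η' w) η
          - Complex.I * (1 + w ^ 2) * deriv (fun η' => L η' w) η
        = -k * (w * (L η w - Complex.I * M η w) - N η w)) :
    (∀ η w : ℂ,
        (1 - w ^ 2) * L η w + Complex.I * (1 + w ^ 2) * M η w + 2 * w * N η w = 0 ∧
        -(Complex.I * (1 + w ^ 2) * L η w) + (1 - w ^ 2) * M η w = 0) ∧
    (∀ η w : ℂ, w ^ 2 ≠ 1 → w ≠ 0 →
        L η w = (1 - w ^ 2) * (L η w / (1 - w ^ 2)) ∧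
        M η w = Complex.I * (1 + w ^ 2) * (L η w / (1 - w ^ 2)) ∧
        N η w = 2 * w * (L η w / (1 - w ^ 2))) := by
  -- First algebraic identity, pointwise from h1, h2, h3
  have hId1 : ∀ η w : ℂ,
      (1 - w ^ 2) * L η w + Complex.I * (1 + w ^ 2) * M η w + 2 * w * N η w = 0 := by
    intro η w
    have key : k * ((1 - w ^ 2) * L η w + Complex.I * (1 + w ^ 2) * M η w
        + 2 * w * N η w) = 0 := by
      linear_combination (-(1 - w ^ 2) / 2) * h1 η w
        + (-(Complex.I * (1 + w ^ 2)) / 2) * h2 η w + (-w) * h3 η w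
        + (k / 2 * (1 + w ^ 2) * (L η w + Complex.I * M η w + w * N η w)) * Complex.I_sq
    rcases mul_eq_zero.mp key with h | h
    · exact absurd h hk
    · exact h
  -- Second algebraic identity (uses holomorphy)
  have hId2 : ∀ η w : ℂ,
      -(Complex.I * (1 + w ^ 2) * L η w) + (1 - w ^ 2) * M η w = 0 := by
    intro η w
    have hcurve : DifferentiableAt ℂ (fun η' : ℂ => (η', w)) η :=
      differentiableAt_id.prodMk (differentiableAt_const w)
    have hdL : HasDerivAt (fun η' => L η' w) (deriv (fun η' => L η' w) η) η := by
      have h := (hL (η, w)).differentiableAt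
      exact (h.comp η hcurve).hasDerivAt
    have hdM : HasDerivAt (fun η' => M η' w) (deriv (fun η' => M η' w) η) η := by
      have h := (hM (η, w)).differentiableAt
      exact (h.comp η hcurve).hasDerivAt
    have hdN : HasDerivAt (fun η' => N η' w) (deriv (fun η' => N η' w) η) η := by
      have h := (hN (η, w)).differentiableAt
      exact (h.comp η hcurve).hasDerivAt
    have H : HasDerivAt (fun η' => (1 - w ^ 2) * L η' w
          + Complex.I * (1 + w ^ 2) * M η' w + 2 * w * N η' w)
        ((1 - w ^ 2) * deriv (fun η' => L η' w) η
          + Complex.I * (1 + w ^ 2) * deriv (fun η' => M η' w) η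
          + 2 * w * deriv (fun η' => N η' w) η) η :=
      ((hdL.const_mul _).add (hdM.const_mul _)).add (hdN.const_mul _)
    have H0 : HasDerivAt (fun η' => (1 - w ^ 2) * L η' w
          + Complex.I * (1 + w ^ 2) * M η' w + 2 * w * N η' w) 0 η := by
      have hfun : (fun η' => (1 - w ^ 2) * L η' w
          + Complex.I * (1 + w ^ 2) * M η' w + 2 * w * N η' w) = fun _ => (0 : ℂ) :=
        funext fun η' => hId1 η' w
      rw [hfun]
      exact hasDerivAt_const η 0
    have hd : (1 - w ^ 2) * deriv (fun η' => L η' w) η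
        + Complex.I * (1 + w ^ 2) * deriv (fun η' => M η' w) η
        + 2 * w * deriv (fun η' => N η' w) η = 0 := H.unique H0
    have hR : w * deriv (fun η' => L η' w) η
        - Complex.I * w * deriv (fun η' => M η' w) η
        - deriv (fun η' => N η' w) η = 0 := by
      linear_combination (Complex.I / 2) * h1 η w + (1 / 2) * h2 η w
        + (-(1 + w ^ 2) / 2 * deriv (fun η' => N η' w) η) * Complex.I_sq
    have hB : (1 + w ^ 2) * deriv (fun η' => L η' w) η
        + Complex.I * (1 - w ^ 2) * deriv (fun η' => M η' w) η = 0 := by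
      linear_combination hd + 2 * w * hR
    have key2 : k * (L η w + Complex.I * M η w + w * N η w) = 0 := by
      linear_combination -(h1 η w) - Complex.I * (1 + w ^ 2) * hR + Complex.I * w * hB
        + (-2 * w * deriv (fun η' => M η' w) η) * Complex.I_sq
    have hS : L η w + Complex.I * M η w + w * N η w = 0 := by
      rcases mul_eq_zero.mp key2 with h | h
      · exact absurd h hk
      · exact h
    linear_combination (-2 * Complex.I) * hS + Complex.I * hId1 η w
      + ((1 - w ^ 2) * M η w) * Complex.I_sq
  refine ⟨fun η w => ⟨hId1 η w, hId2 η w⟩, fun η w hw2 hw0 => ?_⟩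
  have h1w : (1 : ℂ) - w ^ 2 ≠ 0 := sub_ne_zero.mpr (Ne.symm hw2)
  have h2w : (2 : ℂ) * w ≠ 0 := mul_ne_zero two_ne_zero hw0
  refine ⟨?_, ?_, ?_⟩
  · field_simp
  · have e : Complex.I * (1 + w ^ 2) * (L η w / (1 - w ^ 2))
        = Complex.I * (1 + w ^ 2) * L η w / (1 - w ^ 2) := by ring
    rw [e, eq_div_iff h1w]
    linear_combination hId2 η w
  · have e : 2 * w * (L η w / (1 - w ^ 2)) = 2 * w * L η w / (1 - w ^ 2) := by ring
    rw [e, eq_div_iff h1w]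
    have key3 : 2 * w * (N η w * (1 - w ^ 2)) = 2 * w * (2 * w * L η w) := by
      linear_combination (1 - w ^ 2) * hId1 η w - Complex.I * (1 + w ^ 2) * hId2 η w
        + (-(1 + w ^ 2) ^ 2 * L η w) * Complex.I_sq
    exact mul_left_cancel₀ h2w key3
end
end
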